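/- arXiv:math/0210420 — 5 statements merged into one kernel-verified Lean document; each statement's English description precedes it below -/
import Mathlib

section
/- Let A be a commutative C*-algebra and let a, h ∈ A be positive elements of norm at most 1 with ‖a - h‖ < δ for some 0 < δ ≤ 1. Then there exist a positive element h' in the C*-subalgebra generated by h with ‖h - h'‖ ≤ δ, and a positive element g in the C*-subalgebra generated by h and a with ‖g‖ ≤ 1, such that g * a = h'. -/
set_option synthInstance.maxHeartbeats 1000000
set_option maxHeartbeats 2000000

section RealLemmas

variable {δ w η t s : ℝ}

private lemma keyReal (hδ : 0 < δ) (hw0 : 0 ≤ w) (hη : η = δ - w) (hηpos : 0 < η)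
    (ht : 0 ≤ t) (hs : 0 ≤ s) (hts : |t - s| ≤ w) {ε : ℝ} (hε : 0 < ε) :
    |max (t - δ) 0 * (s / (s + ε) ^ 2) - max (t - δ) 0 / max s η| ≤ ε / (2 * η) := by
  rcases le_or_gt t δ with hle | hlt
  · rw [max_eq_right (by linarith)]
    simp only [zero_mul, zero_div, sub_zero, abs_zero]
    positivity
  · have hft : max (t - δ) 0 = t - δ := max_eq_left (by linarith)
    obtain ⟨h1, h2⟩ := abs_le.mp hts
    set x := t - δ with hx
    have hxpos : 0 < x := by simp [hx]; linarith
    have hsx : x + η ≤ s := by simp [hx, hη]; linarith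
    have hspos : 0 < s := by nlinarith
    have hmax : max s η = s := max_eq_left (by nlinarith)
    rw [hft, hmax]
    have hse : (0:ℝ) < (s + ε) ^ 2 := by positivity
    have hkey : x / s - x * (s / (s + ε) ^ 2) = x * ε * (2 * s + ε) / (s * (s + ε) ^ 2) := by
      field_simp
      ring
    rw [abs_sub_comm, abs_of_nonneg]
    · rw [hkey, div_le_div_iff₀ (by positivity) (by positivity)]
      have hs2 : 4 * x * η ≤ s ^ 2 := by nlinarith [sq_nonneg (x - η)]
      nlinarith [mul_le_mul_of_nonneg_right hs2 hspos.le, mul_le_mul_of_nonneg_right hs2 hε.le,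
        mul_pos hspos hε, mul_pos (mul_pos hspos hε) hε]
    · rw [hkey]
      positivity

private lemma keyRealSqrt (hη : η = δ - w) (hηpos : 0 < η)
    (hs : 0 ≤ s) (hts : |t - s| ≤ w) {ε : ℝ} (hε : 0 < ε) :
    |Real.sqrt (max (t - δ) 0) * (Real.sqrt s / (s + ε)) -
      Real.sqrt (max (t - δ) 0) / Real.sqrt (max s η)| ≤ ε / (2 * η) := by
  rcases le_or_gt t δ with hle | hlt
  · rw [max_eq_right (by linarith), Real.sqrt_zero]
    simp only [zero_mul, zero_div, sub_zero, abs_zero]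
    positivity
  · have hft : max (t - δ) 0 = t - δ := max_eq_left (by linarith)
    obtain ⟨h1, h2⟩ := abs_le.mp hts
    have hsx : (t - δ) + η ≤ s := by rw [hη]; linarith
    have hmax : max s η = s := max_eq_left (by nlinarith)
    rw [hft, hmax]
    set u := Real.sqrt (t - δ) with hu
    set r := Real.sqrt s with hrr
    set k := Real.sqrt η with hkk
    have hu0 : 0 ≤ u := Real.sqrt_nonneg _
    have hk : 0 < k := Real.sqrt_pos.mpr hηpos
    have hr : 0 < r := Real.sqrt_pos.mpr (by nlinarith)
    have hu2 : u ^ 2 = t - δ := Real.sq_sqrt (by linarith)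
    have hr2 : r ^ 2 = s := Real.sq_sqrt (by nlinarith)
    have hk2 : k ^ 2 = η := Real.sq_sqrt hηpos.le
    have hrk : k ≤ r := by nlinarith
    have hspos : 0 < s := by nlinarith
    have hexp : u * (r / (s + ε)) - u / r = -(u * ε / (r * (s + ε))) := by
      rw [← hr2]
      field_simp
      ring
    rw [hexp, abs_neg, abs_of_nonneg (by positivity)]
    rw [div_le_div_iff₀ (by positivity) (by positivity)]
    have key : 2 * η * u ≤ r * s := by
      have k2' : u ^ 2 + k ^ 2 ≤ r ^ 2 := by nlinarith
      have k1 : k * (u ^ 2 + k ^ 2) ≤ r * r ^ 2 := by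
        nlinarith [mul_le_mul_of_nonneg_left k2' hk.le,
          mul_le_mul_of_nonneg_right hrk (sq_nonneg r)]
      nlinarith [mul_le_mul_of_nonneg_left (sq_nonneg (u - k)) hk.le]
    have e3 : ε * (2 * η * u) ≤ ε * (r * s) := mul_le_mul_of_nonneg_left key hε.le
    nlinarith [mul_pos (mul_pos hr hε) hε]

private lemma keyRealMul (hη : η = δ - w) (hηpos : 0 < η)
    (hs : 0 ≤ s) (hts : |t - s| ≤ w) :
    max (t - δ) 0 / max s η * s = max (t - δ) 0 := by
  rcases le_or_gt t δ with hle | hlt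
  · rw [max_eq_right (by linarith)]; simp
  · obtain ⟨h1, h2⟩ := abs_le.mp hts
    have hsx : (t - δ) + η ≤ s := by rw [hη]; linarith
    have hmax : max s η = s := max_eq_left (by nlinarith)
    have hspos : 0 < s := by nlinarith
    rw [hmax, div_mul_cancel₀ _ hspos.ne']

private lemma keyRealLeOne (hη : η = δ - w) (hηpos : 0 < η)
    (hs : 0 ≤ s) (hts : |t - s| ≤ w) :
    |max (t - δ) 0 / max s η| ≤ 1 := by
  rw [abs_of_nonneg (by positivity)]
  rcases le_or_gt t δ with hle | hlt
  · rw [max_eq_right (by linarith)]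
    simp
  · have hft : max (t - δ) 0 = t - δ := max_eq_left (by linarith)
    obtain ⟨h1, h2⟩ := abs_le.mp hts
    have hsx : (t - δ) + η ≤ s := by rw [hη]; linarith
    have hmax : max s η = s := max_eq_left (by nlinarith)
    rw [hft, hmax, div_le_one (by nlinarith)]
    linarith

private lemma keyRealDiff (hδ : 0 < δ) (ht : 0 ≤ t) : |t - max (t - δ) 0| ≤ δ := by
  rcases le_or_gt t δ with hle | hlt
  · rw [max_eq_right (by linarith), sub_zero, abs_of_nonneg ht]; exact hle
  · rw [max_eq_left (by linarith)]
    simp [abs_of_nonneg hδ.le]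

end RealLemmas

private lemma cauchy_aux {A : Type*} [NormedAddCommGroup A] [CompleteSpace A] {η : ℝ}
    (hηpos : 0 < η) (F : ℕ → A)
    (hd : ∀ n m : ℕ, ‖F n - F m‖ ≤ 1 / (n + 1) / (2 * η) + 1 / (m + 1) / (2 * η)) :
    ∃ x, Filter.Tendsto F Filter.atTop (nhds x) := by
  have hFdist : ∀ (n m N : ℕ), N ≤ n → N ≤ m → dist (F n) (F m) ≤ (1 / (N + 1)) / η := by
    intro n m N hn hm
    rw [dist_eq_norm]
    refine (hd n m).trans ?_
    have e1 : (1:ℝ) / (n + 1) ≤ 1 / (N + 1) := by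
      apply one_div_le_one_div_of_le (by positivity)
      have : (N:ℝ) ≤ n := Nat.cast_le.mpr hn
      linarith
    have e2 : (1:ℝ) / (m + 1) ≤ 1 / (N + 1) := by
      apply one_div_le_one_div_of_le (by positivity)
      have : (N:ℝ) ≤ m := Nat.cast_le.mpr hm
      linarith
    calc 1 / (n + 1) / (2 * η) + 1 / (m + 1) / (2 * η)
        ≤ 1 / (N + 1) / (2 * η) + 1 / (N + 1) / (2 * η) := by gcongr
      _ = (1 / (N + 1)) / η := by
          field_simp
          ring
  apply cauchySeq_tendsto_of_complete
  apply cauchySeq_of_le_tendsto_0 (fun N : ℕ => (1 / (N + 1)) / η) hFdist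
  have := tendsto_one_div_add_atTop_nhds_zero_nat.div_const η
  simpa using this

open NonUnitalStarAlgebra in
private lemma cfcn_mem_closure_adjoin {A : Type*} [NonUnitalCStarAlgebra A] (x : A)
    (hx : IsSelfAdjoint x) (f : ℝ → ℝ) (hf : Continuous f) (hf0 : f 0 = 0) :
    cfcₙ f x ∈ closure ((adjoin ℝ {x} : NonUnitalStarSubalgebra ℝ A) : Set A) := by
  have hd := ContinuousMapZero.adjoin_id_dense (𝕜 := ℝ) (s := quasispectrum ℝ x)
  have hsub :=
    (cfcₙHom_isClosedEmbedding (R := ℝ) hx).continuous.range_subset_closure_image_dense hd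
  have himg : (cfcₙHom (R := ℝ) hx) ''
        (adjoin ℝ {(ContinuousMapZero.id (quasispectrum ℝ x) : ContinuousMapZero (quasispectrum ℝ x) ℝ)} :
          NonUnitalStarSubalgebra ℝ _)
      = ((adjoin ℝ {x} : NonUnitalStarSubalgebra ℝ A) : Set A) := by
    rw [← NonUnitalStarSubalgebra.coe_map, NonUnitalStarAlgHom.map_adjoin_singleton]
    rw [show (cfcₙHom (R := ℝ) hx (ContinuousMapZero.id (quasispectrum ℝ x))) = x from cfcₙHom_id hx]
  rw [himg] at hsub
  rw [cfcₙ_apply f x (hf.continuousOn) hf0 hx]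
  exact hsub ⟨_, rfl⟩

open NonUnitalStarAlgebra in
private lemma real_adjoin_subset_complex {A : Type*} [NonUnitalCStarAlgebra A] (s : Set A) :
    ((adjoin ℝ s : NonUnitalStarSubalgebra ℝ A) : Set A) ⊆
      ((adjoin ℂ s : NonUnitalStarSubalgebra ℂ A) : Set A) := by
  intro y hy
  induction hy using NonUnitalStarAlgebra.adjoin_induction with
  | mem z hz => exact subset_adjoin ℂ s hz
  | add _ _ _ _ h1 h2 => exact add_mem h1 h2
  | zero => exact zero_mem _
  | mul _ _ _ _ h1 h2 => exact mul_mem h1 h2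
  | smul r z _ hz =>
      rw [show r • z = (r : ℂ) • z from (RCLike.real_smul_eq_coe_smul (K := ℂ) r z)]
      exact SMulMemClass.smul_mem _ hz
  | star _ _ hz => exact star_mem hz

section Char

variable {A : Type} [NonUnitalCommCStarAlgebra A]

open WeakDual Unitization

/-- A character of the unitization, as a nonunital star hom on `A`. -/
private noncomputable def charA (φ : characterSpace ℂ (Unitization ℂ A)) : A →⋆ₙₐ[ℂ] ℂ where
  toFun x := φ (x : Unitization ℂ A)
  map_smul' c x := by
    show φ ((c • x : A) : Unitization ℂ A) = _; rw [inr_smul, map_smul]; rfl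
  map_zero' := by show φ ((0 : A) : Unitization ℂ A) = 0; rw [inr_zero, map_zero]
  map_add' x y := by show φ ((x + y : A) : Unitization ℂ A) = _; rw [inr_add, map_add]
  map_mul' x y := by show φ ((x * y : A) : Unitization ℂ A) = _; rw [inr_mul, map_mul]
  map_star' x := by show φ ((star x : A) : Unitization ℂ A) = _; rw [inr_star, map_star]

private lemma charA_continuous (φ : characterSpace ℂ (Unitization ℂ A)) :
    Continuous (charA φ) := by
  have h1 : Continuous φ := map_continuous φ
  exact h1.comp (isometry_inr (𝕜 := ℂ) (A := A)).continuous

private lemma charA_norm_le (φ : characterSpace ℂ (Unitization ℂ A)) (x : A) :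
    ‖charA φ x‖ ≤ ‖x‖ := by
  have h1 : φ (x : Unitization ℂ A) ∈ spectrum ℂ ((x : Unitization ℂ A)) :=
    WeakDual.CharacterSpace.apply_mem_spectrum φ _
  have := spectrum.norm_le_norm_of_mem h1
  rwa [Unitization.norm_inr] at this

private lemma charA_nonneg_val (φ : characterSpace ℂ (Unitization ℂ A)) {x : A}
    (hx : ∃ b : A, x = star b * b) : ∃ r : ℝ, 0 ≤ r ∧ charA φ x = (r : ℂ) := by
  obtain ⟨b, rfl⟩ := hx
  refine ⟨Complex.normSq (charA φ b), Complex.normSq_nonneg _, ?_⟩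
  rw [map_mul, map_star]
  rw [RCLike.star_def, mul_comm, Complex.mul_conj]

private lemma norm_le_of_char {c : ℝ} (hc : 0 ≤ c) (x : A)
    (hx : ∀ φ : characterSpace ℂ (Unitization ℂ A), ‖charA φ x‖ ≤ c) : ‖x‖ ≤ c := by
  rw [← Unitization.norm_inr (𝕜 := ℂ) x,
    ← (gelfandTransform_isometry (Unitization ℂ A)).norm_map_of_map_zero (map_zero _)]
  rw [ContinuousMap.norm_le _ hc]
  exact fun φ => hx φ

private lemma eq_zero_of_char (x : A)
    (hx : ∀ φ : characterSpace ℂ (Unitization ℂ A), charA φ x = 0) : x = 0 := by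
  have := norm_le_of_char le_rfl x (fun φ => by rw [hx φ]; simp)
  simpa using norm_le_zero_iff.mp this

private lemma charA_cfcₙ (φ : characterSpace ℂ (Unitization ℂ A)) (x : A) (hx : IsSelfAdjoint x)
    {t : ℝ} (hxt : charA φ x = (t : ℂ)) (f : ℝ → ℝ) (hf : Continuous f) (hf0 : f 0 = 0) :
    charA φ (cfcₙ f x) = (f t : ℂ) := by
  have hsa : IsSelfAdjoint (charA φ x) := by
    rw [hxt]; exact Complex.conj_ofReal t
  have key := NonUnitalStarAlgHomClass.map_cfcₙ (S := ℂ) (q := IsSelfAdjoint) (charA φ) f x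
    (hf.continuousOn) hf0 (charA_continuous φ) hx hsa
  rw [key, hxt]
  have h2 : ((t : ℂ)) = algebraMap ℝ ℂ t := rfl
  rw [h2, cfcₙ_eq_cfc (hf.continuousOn) hf0, cfc_algebraMap t f]
  rfl

end Char

/-- **Commutative perturbation lemma** (Winter, "Decomposition rank of subhomogeneous
C*-algebras", Proposition 4.4 / `commutative-perturbation`):
Let `A` be a commutative C*-algebra and `a, h` positive elements of norm at most `1`
with `‖a - h‖ < δ` for some `0 < δ ≤ 1`.  Then there are a positive `h'` in the
C*-subalgebra generated by `h` with `‖h - h'‖ ≤ δ` and a positive `g` in the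
C*-subalgebra generated by `h` and `a` with `‖g‖ ≤ 1` such that `g * a = h'`. -/
theorem commutative_perturbation {A : Type} [NonUnitalCommCStarAlgebra A]
    (a h : A) (ha : ∃ b : A, a = star b * b) (hh : ∃ b : A, h = star b * b)
    (hna : ‖a‖ ≤ 1) (hnh : ‖h‖ ≤ 1)
    (δ : ℝ) (hδ0 : 0 < δ) (hδ1 : δ ≤ 1) (hclose : ‖a - h‖ < δ) :
    ∃ h' g : A,
      h' ∈ closure ((NonUnitalStarAlgebra.adjoin ℂ {h} : NonUnitalStarSubalgebra ℂ A) : Set A) ∧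
      (∃ b : A, h' = star b * b) ∧ ‖h - h'‖ ≤ δ ∧
      g ∈ closure ((NonUnitalStarAlgebra.adjoin ℂ {h, a} : NonUnitalStarSubalgebra ℂ A) : Set A) ∧
      (∃ b : A, g = star b * b) ∧ ‖g‖ ≤ 1 ∧ g * a = h' := by
  classical
  have hsa_a : IsSelfAdjoint a := by
    obtain ⟨b, rfl⟩ := ha; exact IsSelfAdjoint.star_mul_self b
  have hsa_h : IsSelfAdjoint h := by
    obtain ⟨b, rfl⟩ := hh; exact IsSelfAdjoint.star_mul_self b
  set w : ℝ := ‖a - h‖ with hw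
  have hw0 : 0 ≤ w := norm_nonneg _
  set η : ℝ := δ - w with hη
  have hηpos : 0 < η := by rw [hη]; linarith
  have hfc : Continuous (fun t : ℝ => max (t - δ) 0) := by fun_prop
  have hf0 : max ((0:ℝ) - δ) 0 = 0 := max_eq_right (by linarith)
  set h' : A := cfcₙ (fun t : ℝ => max (t - δ) 0) h with hh'
  -- basic character data
  have charData : ∀ φ : WeakDual.characterSpace ℂ (Unitization ℂ A),
      ∃ t s : ℝ, 0 ≤ t ∧ 0 ≤ s ∧ charA φ h = (t:ℂ) ∧ charA φ a = (s:ℂ) ∧ |t - s| ≤ w := by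
    intro φ
    obtain ⟨t, ht0, hht⟩ := charA_nonneg_val φ hh
    obtain ⟨s, hs0, has⟩ := charA_nonneg_val φ ha
    refine ⟨t, s, ht0, hs0, hht, has, ?_⟩
    have h1 : charA φ (h - a) = ((t - s : ℝ) : ℂ) := by rw [map_sub, hht, has]; push_cast; ring
    have h2 := charA_norm_le φ (h - a)
    rw [h1, Complex.norm_real, Real.norm_eq_abs, norm_sub_rev] at h2
    exact h2
  have charH' : ∀ (φ : WeakDual.characterSpace ℂ (Unitization ℂ A)) (t : ℝ),
      charA φ h = (t:ℂ) → charA φ h' = ((max (t - δ) 0 : ℝ) : ℂ) := by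
    intro φ t hht
    exact charA_cfcₙ φ h hsa_h hht _ hfc hf0
  -- approximating sequence for g
  have hεpos : ∀ n : ℕ, (0:ℝ) < 1 / (n + 1) := fun n => by positivity
  have hvc : ∀ n : ℕ, Continuous (fun t : ℝ => |t| / (|t| + 1 / (n + 1)) ^ 2) := by
    intro n
    exact Continuous.div (by fun_prop) (by fun_prop)
      (fun t => by have := hεpos n; positivity)
  have hv0 : ∀ n : ℕ, |(0:ℝ)| / (|(0:ℝ)| + 1 / (n + 1)) ^ 2 = 0 := fun n => by simp
  set G : ℕ → A := fun n => h' * cfcₙ (fun t : ℝ => |t| / (|t| + 1 / (n + 1)) ^ 2) a with hG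
  have charG : ∀ (n : ℕ) (φ : WeakDual.characterSpace ℂ (Unitization ℂ A)) (t s : ℝ),
      0 ≤ s → charA φ h = (t:ℂ) → charA φ a = (s:ℂ) →
      charA φ (G n) = ((max (t - δ) 0 * (s / (s + 1 / (n + 1)) ^ 2) : ℝ) : ℂ) := by
    intro n φ t s hs0 hht has
    simp only [hG]
    rw [map_mul, charH' φ t hht, charA_cfcₙ φ a hsa_a has _ (hvc n) (hv0 n)]
    rw [abs_of_nonneg hs0]
    push_cast
    ring
  have hdist : ∀ (n m : ℕ), ‖G n - G m‖ ≤ 1 / (n + 1) / (2 * η) + 1 / (m + 1) / (2 * η) := by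
    intro n m
    apply norm_le_of_char (by positivity)
    intro φ
    obtain ⟨t, s, ht0, hs0, hht, has, hts⟩ := charData φ
    rw [map_sub, charG n φ t s hs0 hht has, charG m φ t s hs0 hht has]
    rw [show ((max (t - δ) 0 * (s / (s + 1 / (n + 1)) ^ 2) : ℝ) : ℂ) -
        ((max (t - δ) 0 * (s / (s + 1 / (m + 1)) ^ 2) : ℝ) : ℂ)
        = (((max (t - δ) 0 * (s / (s + 1 / (n + 1)) ^ 2)
            - max (t - δ) 0 * (s / (s + 1 / (m + 1)) ^ 2) : ℝ)) : ℂ) by push_cast; ring]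
    rw [Complex.norm_real, Real.norm_eq_abs]
    have k1 := keyReal hδ0 hw0 hη hηpos ht0 hs0 hts (hεpos n)
    have k2 := keyReal hδ0 hw0 hη hηpos ht0 hs0 hts (hεpos m)
    calc |max (t - δ) 0 * (s / (s + 1 / (n + 1)) ^ 2)
            - max (t - δ) 0 * (s / (s + 1 / (m + 1)) ^ 2)|
        ≤ |max (t - δ) 0 * (s / (s + 1 / (n + 1)) ^ 2) - max (t - δ) 0 / max s η|
          + |max (t - δ) 0 * (s / (s + 1 / (m + 1)) ^ 2) - max (t - δ) 0 / max s η| := by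
          rw [show max (t - δ) 0 * (s / (s + 1 / (n + 1)) ^ 2)
              - max (t - δ) 0 * (s / (s + 1 / (m + 1)) ^ 2)
              = (max (t - δ) 0 * (s / (s + 1 / (n + 1)) ^ 2) - max (t - δ) 0 / max s η)
                - (max (t - δ) 0 * (s / (s + 1 / (m + 1)) ^ 2) - max (t - δ) 0 / max s η)
              by ring]
          exact abs_sub _ _
      _ ≤ 1 / (n + 1) / (2 * η) + 1 / (m + 1) / (2 * η) := add_le_add k1 k2
  obtain ⟨g, hg⟩ := cauchy_aux hηpos G hdist
  have hten0 : Filter.Tendsto (fun n : ℕ => (1:ℝ) / (n + 1)) Filter.atTop (nhds 0) :=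
    tendsto_one_div_add_atTop_nhds_zero_nat
  -- the character values of `g`
  have charg : ∀ (φ : WeakDual.characterSpace ℂ (Unitization ℂ A)) (t s : ℝ),
      0 ≤ t → 0 ≤ s → charA φ h = (t:ℂ) → charA φ a = (s:ℂ) → |t - s| ≤ w →
      charA φ g = ((max (t - δ) 0 / max s η : ℝ) : ℂ) := by
    intro φ t s ht0 hs0 hht has hts
    have l1 : Filter.Tendsto (fun n => charA φ (G n)) Filter.atTop (nhds (charA φ g)) :=
      ((charA_continuous φ).tendsto g).comp hg
    have l2 : Filter.Tendsto (fun n => charA φ (G n)) Filter.atTop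
        (nhds ((max (t - δ) 0 / max s η : ℝ) : ℂ)) := by
      rw [tendsto_iff_dist_tendsto_zero]
      apply squeeze_zero (fun n => dist_nonneg) (g := fun n : ℕ => 1 / (n + 1) / (2 * η))
      · intro n
        rw [charG n φ t s hs0 hht has, dist_eq_norm]
        rw [show ((max (t - δ) 0 * (s / (s + 1 / (n + 1)) ^ 2) : ℝ) : ℂ)
            - ((max (t - δ) 0 / max s η : ℝ) : ℂ)
            = (((max (t - δ) 0 * (s / (s + 1 / (n + 1)) ^ 2)
                - max (t - δ) 0 / max s η : ℝ)) : ℂ) by push_cast; ring]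
        rw [Complex.norm_real, Real.norm_eq_abs]
        exact keyReal hδ0 hw0 hη hηpos ht0 hs0 hts (hεpos n)
      · have := hten0.div_const (2 * η)
        simpa using this
    exact tendsto_nhds_unique l1 l2
  -- square root of h'
  have hbc : Continuous (fun t : ℝ => Real.sqrt (max (t - δ) 0)) :=
    Real.continuous_sqrt.comp hfc
  have hb00 : Real.sqrt (max ((0:ℝ) - δ) 0) = 0 := by rw [hf0, Real.sqrt_zero]
  have hsab : IsSelfAdjoint (cfcₙ (fun t : ℝ => Real.sqrt (max (t - δ) 0)) h) :=
    cfcₙ_predicate _ h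
  have hb0sq : cfcₙ (fun t : ℝ => Real.sqrt (max (t - δ) 0)) h *
      cfcₙ (fun t : ℝ => Real.sqrt (max (t - δ) 0)) h = h' := by
    rw [← cfcₙ_mul _ _ h (hbc.continuousOn) hb00 (hbc.continuousOn) hb00, hh']
    apply cfcₙ_congr
    intro x _
    exact Real.mul_self_sqrt (le_max_right _ _)
  have m1 : h' ∈ closure
      ((NonUnitalStarAlgebra.adjoin ℂ {h} : NonUnitalStarSubalgebra ℂ A) : Set A) :=
    closure_mono (real_adjoin_subset_complex {h})
      (cfcn_mem_closure_adjoin h hsa_h _ hfc hf0)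
  refine ⟨h', g, m1, ?_, ?_, ?_, ?_, ?_, ?_⟩
  · exact ⟨cfcₙ (fun t : ℝ => Real.sqrt (max (t - δ) 0)) h, by rw [hsab.star_eq, hb0sq]⟩
  · apply norm_le_of_char hδ0.le
    intro φ
    obtain ⟨t, s, ht0, hs0, hht, has, hts⟩ := charData φ
    rw [map_sub, hht, charH' φ t hht]
    rw [show ((t:ℂ) - ((max (t - δ) 0 : ℝ) : ℂ)) = (((t - max (t - δ) 0 : ℝ)) : ℂ) by
      push_cast; ring]
    rw [Complex.norm_real, Real.norm_eq_abs]
    exact keyRealDiff hδ0 ht0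
  · -- membership of `g`
    set S := (NonUnitalStarAlgebra.adjoin ℂ {h, a} : NonUnitalStarSubalgebra ℂ A) with hS
    have hcoe : (S.topologicalClosure : Set A) = closure (S : Set A) := rfl
    have hmem : ∀ n, G n ∈ closure (S : Set A) := by
      intro n
      have hsub1 : (NonUnitalStarAlgebra.adjoin ℂ {h} : NonUnitalStarSubalgebra ℂ A) ≤ S :=
        NonUnitalStarAlgebra.adjoin_le
          (Set.singleton_subset_iff.mpr
            (NonUnitalStarAlgebra.subset_adjoin ℂ _ (by simp)))
      have hsub2 : (NonUnitalStarAlgebra.adjoin ℂ {a} : NonUnitalStarSubalgebra ℂ A) ≤ S :=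
        NonUnitalStarAlgebra.adjoin_le
          (Set.singleton_subset_iff.mpr
            (NonUnitalStarAlgebra.subset_adjoin ℂ _ (by simp)))
      have t1 : h' ∈ closure (S : Set A) := closure_mono hsub1 m1
      have t2 : cfcₙ (fun t : ℝ => |t| / (|t| + 1 / (n + 1)) ^ 2) a ∈ closure (S : Set A) :=
        closure_mono hsub2 (closure_mono (real_adjoin_subset_complex {a})
          (cfcn_mem_closure_adjoin a hsa_a _ (hvc n) (hv0 n)))
      rw [← hcoe] at t1 t2 ⊢
      exact mul_mem t1 t2
    have : g ∈ closure (closure (S : Set A)) :=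
      mem_closure_of_tendsto hg (Filter.Eventually.of_forall hmem)
    rwa [closure_closure] at this
  · -- g is a square: construct an explicit square root as a limit
    have hucont : ∀ n : ℕ, Continuous (fun t : ℝ => Real.sqrt |t| / (|t| + 1 / (n + 1))) := by
      intro n
      exact Continuous.div (by fun_prop) (by fun_prop)
        (fun t => by have := hεpos n; positivity)
    have hu00 : ∀ n : ℕ, Real.sqrt |(0:ℝ)| / (|(0:ℝ)| + 1 / (n + 1)) = 0 := fun n => by simp
    set Bq : ℕ → A := fun n =>
      cfcₙ (fun t : ℝ => Real.sqrt (max (t - δ) 0)) h *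
        cfcₙ (fun t : ℝ => Real.sqrt |t| / (|t| + 1 / (n + 1))) a with hBq
    have hcc : ∀ n : ℕ, cfcₙ (fun t : ℝ => Real.sqrt |t| / (|t| + 1 / (n + 1))) a *
        cfcₙ (fun t : ℝ => Real.sqrt |t| / (|t| + 1 / (n + 1))) a
        = cfcₙ (fun t : ℝ => |t| / (|t| + 1 / (n + 1)) ^ 2) a := by
      intro n
      rw [← cfcₙ_mul _ _ a ((hucont n).continuousOn) (hu00 n) ((hucont n).continuousOn) (hu00 n)]
      apply cfcₙ_congr
      intro x _
      have hx : Real.sqrt |x| * Real.sqrt |x| = |x| := Real.mul_self_sqrt (abs_nonneg x)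
      show Real.sqrt |x| / (|x| + 1 / (n + 1)) * (Real.sqrt |x| / (|x| + 1 / (n + 1)))
          = |x| / (|x| + 1 / (n + 1)) ^ 2
      rw [div_mul_div_comm, hx, sq]
    have hGB : ∀ n, G n = star (Bq n) * Bq n := by
      intro n
      have hsac : IsSelfAdjoint (cfcₙ (fun t : ℝ => Real.sqrt |t| / (|t| + 1 / (n + 1))) a) :=
        cfcₙ_predicate _ a
      have hstar : star (Bq n) = Bq n := by
        simp only [hBq, star_mul, hsab.star_eq, hsac.star_eq]
        exact mul_comm _ _
      rw [hstar]
      simp only [hBq, hG]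
      rw [mul_mul_mul_comm, hb0sq, hcc n]
    have charB : ∀ (n : ℕ) (φ : WeakDual.characterSpace ℂ (Unitization ℂ A)) (t s : ℝ),
        0 ≤ s → charA φ h = (t:ℂ) → charA φ a = (s:ℂ) →
        charA φ (Bq n)
          = ((Real.sqrt (max (t - δ) 0) * (Real.sqrt s / (s + 1 / (n + 1))) : ℝ) : ℂ) := by
      intro n φ t s hs0 hht has
      simp only [hBq]
      rw [map_mul, charA_cfcₙ φ h hsa_h hht _ hbc hb00,
        charA_cfcₙ φ a hsa_a has _ (hucont n) (hu00 n)]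
      rw [abs_of_nonneg hs0]
      push_cast
      ring
    have hBdist : ∀ (n m : ℕ),
        ‖Bq n - Bq m‖ ≤ 1 / (n + 1) / (2 * η) + 1 / (m + 1) / (2 * η) := by
      intro n m
      apply norm_le_of_char (by positivity)
      intro φ
      obtain ⟨t, s, ht0, hs0, hht, has, hts⟩ := charData φ
      rw [map_sub, charB n φ t s hs0 hht has, charB m φ t s hs0 hht has]
      rw [show ((Real.sqrt (max (t - δ) 0) * (Real.sqrt s / (s + 1 / (n + 1))) : ℝ) : ℂ) -
          ((Real.sqrt (max (t - δ) 0) * (Real.sqrt s / (s + 1 / (m + 1))) : ℝ) : ℂ)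
          = (((Real.sqrt (max (t - δ) 0) * (Real.sqrt s / (s + 1 / (n + 1)))
              - Real.sqrt (max (t - δ) 0) * (Real.sqrt s / (s + 1 / (m + 1))) : ℝ)) : ℂ) by
        push_cast; ring]
      rw [Complex.norm_real, Real.norm_eq_abs]
      have k1 := keyRealSqrt hη hηpos hs0 hts (hεpos n)
      have k2 := keyRealSqrt hη hηpos hs0 hts (hεpos m)
      calc |Real.sqrt (max (t - δ) 0) * (Real.sqrt s / (s + 1 / (n + 1)))
              - Real.sqrt (max (t - δ) 0) * (Real.sqrt s / (s + 1 / (m + 1)))|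
          ≤ |Real.sqrt (max (t - δ) 0) * (Real.sqrt s / (s + 1 / (n + 1)))
                - Real.sqrt (max (t - δ) 0) / Real.sqrt (max s η)|
            + |Real.sqrt (max (t - δ) 0) * (Real.sqrt s / (s + 1 / (m + 1)))
                - Real.sqrt (max (t - δ) 0) / Real.sqrt (max s η)| := by
            rw [show Real.sqrt (max (t - δ) 0) * (Real.sqrt s / (s + 1 / (n + 1)))
                - Real.sqrt (max (t - δ) 0) * (Real.sqrt s / (s + 1 / (m + 1)))
                = (Real.sqrt (max (t - δ) 0) * (Real.sqrt s / (s + 1 / (n + 1)))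
                    - Real.sqrt (max (t - δ) 0) / Real.sqrt (max s η))
                  - (Real.sqrt (max (t - δ) 0) * (Real.sqrt s / (s + 1 / (m + 1)))
                    - Real.sqrt (max (t - δ) 0) / Real.sqrt (max s η)) by ring]
            exact abs_sub _ _
        _ ≤ 1 / (n + 1) / (2 * η) + 1 / (m + 1) / (2 * η) := add_le_add k1 k2
    obtain ⟨b, hb⟩ := cauchy_aux hηpos Bq hBdist
    refine ⟨b, ?_⟩
    have l1 : Filter.Tendsto (fun n => star (Bq n) * Bq n) Filter.atTop
        (nhds (star b * b)) := (hb.star).mul hb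
    have l2 : Filter.Tendsto (fun n => star (Bq n) * Bq n) Filter.atTop (nhds g) := by
      have hfun : (fun n => star (Bq n) * Bq n) = G := funext fun n => (hGB n).symm
      rw [hfun]
      exact hg
    exact tendsto_nhds_unique l2 l1
  · apply norm_le_of_char zero_le_one
    intro φ
    obtain ⟨t, s, ht0, hs0, hht, has, hts⟩ := charData φ
    rw [charg φ t s ht0 hs0 hht has hts, Complex.norm_real, Real.norm_eq_abs]
    exact keyRealLeOne hη hηpos hs0 hts
  · -- the equation
    have key : g * a - h' = 0 := by
      apply eq_zero_of_char
      intro φ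
      obtain ⟨t, s, ht0, hs0, hht, has, hts⟩ := charData φ
      rw [map_sub, map_mul, charg φ t s ht0 hs0 hht has hts, has, charH' φ t hht]
      rw [show ((max (t - δ) 0 / max s η : ℝ) : ℂ) * (s : ℂ)
          = ((max (t - δ) 0 / max s η * s : ℝ) : ℂ) by push_cast; ring]
      rw [keyRealMul hη hηpos hs0 hts]
      ring
    exact sub_eq_zero.mp key
end

section
/- For each r ∈ ℕ there exists α > 0 such that: for every C*-subalgebra F of the matrix algebra M_r with a set of matrix units {e_1, …, e_k}, and every projection q ∈ F, either q lies in the center of F or ‖e_m q - q e_m‖ ≥ α for some m ∈ {1, …, k}. -/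
open scoped Matrix.Norms.L2Operator

noncomputable section

abbrev MatC (r : ℕ) : Type := Matrix (Fin r) (Fin r) ℂ

/-- `f` is a system of matrix units for the C*-subalgebra `F` of `M_r`:
it satisfies the standard matrix-unit relations and spans `F`. -/
def IsMatrixUnits {r : ℕ} (F : NonUnitalStarSubalgebra ℂ (MatC r)) (s : ℕ) (rr : Fin s → ℕ)
    (f : (i : Fin s) → Fin (rr i) → Fin (rr i) → MatC r) : Prop :=
  (∀ i l m, f i l m ∈ F) ∧
  (∀ i l m l' m', f i l m * f i l' m' = if m = l' then f i l m' else 0) ∧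
  (∀ i i' l m l' m', i ≠ i' → f i l m * f i' l' m' = 0) ∧
  (∀ i l m, star (f i l m) = f i m l) ∧
  (∀ x ∈ F, x ∈ Submodule.span ℂ {y : MatC r | ∃ i l m, y = f i l m})

/-- An idempotent matrix of norm `< 1` is zero. -/
lemma MatC.idem_eq_zero_of_norm_lt_one {r : ℕ} {e : MatC r} (he : e * e = e) (hn : ‖e‖ < 1) :
    e = 0 := by
  by_contra h0
  have h1 : 0 < ‖e‖ := norm_pos_iff.mpr h0
  have h2 : ‖e‖ ≤ ‖e‖ * ‖e‖ := by
    conv_lhs => rw [← he]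
    exact norm_mul_le _ _
  nlinarith

/-- A self-adjoint idempotent matrix has norm at most one. -/
lemma MatC.proj_norm_le_one {r : ℕ} {e : MatC r} (he : e * e = e) (hs : star e = e) :
    ‖e‖ ≤ 1 := by
  rcases eq_or_ne e 0 with h | h
  · simp [h]
  · have h1 : 0 < ‖e‖ := norm_pos_iff.mpr h
    have h2 : ‖e‖ * ‖e‖ = ‖e‖ := by
      conv_rhs => rw [← he]
      rw [← CStarRing.norm_star_mul_self (x := e), hs]
    nlinarith

/-- Norm of a sandwich `a * x * b` with contractions `a`, `b`. -/
lemma MatC.norm_sandwich {r : ℕ} {a b : MatC r} (x : MatC r) (ha : ‖a‖ ≤ 1) (hb : ‖b‖ ≤ 1) :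
    ‖a * x * b‖ ≤ ‖x‖ := by
  have h1 : ‖a * x * b‖ ≤ ‖a * x‖ * ‖b‖ := norm_mul_le _ _
  have h2 : ‖a * x‖ ≤ ‖a‖ * ‖x‖ := norm_mul_le _ _
  have := norm_nonneg x
  have := norm_nonneg (a * x)
  have := norm_nonneg a
  have := norm_nonneg b
  nlinarith

set_option maxHeartbeats 2000000 in
/-- **Winter, Proposition 3.5 (`matrix-units`)**: for each `r` there is `α > 0` such that for
every C*-subalgebra `F ⊆ M_r` with a set of matrix units and every projection `q ∈ F`,
either `q` is central in `F`, or `q` fails to commute with some matrix unit by at least `α`. -/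
theorem matrix_units_central_gap (r : ℕ) :
    ∃ α : ℝ, 0 < α ∧
      ∀ (F : NonUnitalStarSubalgebra ℂ (MatC r)) (s : ℕ) (rr : Fin s → ℕ)
        (f : (i : Fin s) → Fin (rr i) → Fin (rr i) → MatC r),
        IsMatrixUnits F s rr f →
        ∀ q : MatC r, q ∈ F → IsSelfAdjoint q → q * q = q →
          (∀ x ∈ F, q * x = x * q) ∨ ∃ i l m, α ≤ ‖f i l m * q - q * f i l m‖ := by
  set α : ℝ := 1 / (100 * (((r:ℝ)*r)*((r:ℝ)*r) + 1)) with hαdef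
  have hα_pos : (0:ℝ) < α := by positivity
  refine ⟨α, hα_pos, ?_⟩
  intro F s rr f hf q hqF hq_sa hq_idem
  obtain ⟨hmem, hmul, hmul', hstar, hspan⟩ := hf
  by_cases hex : ∃ i l m, α ≤ ‖f i l m * q - q * f i l m‖
  · exact Or.inr hex
  push_neg at hex
  left
  -- basic norm bound for matrix units
  have hproj_idem : ∀ i l, f i l l * f i l l = f i l l := by
    intro i l; simpa using hmul i l l l l
  have hnormf : ∀ i l m, ‖f i l m‖ ≤ 1 := by
    intro i l m
    have h1 : star (f i l m) * f i l m = f i m m := by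
      rw [hstar]; simpa using hmul i m l l m
    have h2 : ‖f i m m‖ ≤ 1 := MatC.proj_norm_le_one (hproj_idem i m) (hstar i m m)
    have h3 : ‖f i l m‖ * ‖f i l m‖ = ‖f i m m‖ := by
      rw [← h1, CStarRing.norm_star_mul_self]
    have := norm_nonneg (f i l m)
    nlinarith
  -- the block units
  obtain ⟨p, hpdef⟩ : ∃ p : Fin s → MatC r, ∀ i, p i = ∑ l, f i l l :=
    ⟨fun i => ∑ l, f i l l, fun _ => rfl⟩
  have hpstar : ∀ i, star (p i) = p i := by
    intro i; simp [hpdef, star_sum, hstar]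
  have hpf : ∀ i j l m, p i * f j l m = if i = j then f j l m else 0 := by
    intro i j l m
    rcases eq_or_ne i j with h | h
    · subst h
      simp only [hpdef, Finset.sum_mul, hmul, if_pos rfl]
      simp [Finset.sum_ite_eq']
    · simp only [hpdef, Finset.sum_mul, if_neg h]
      rw [Finset.sum_eq_zero]
      intro l' _
      exact hmul' i j l' l' l m h
  have hfp : ∀ j i l m, f j l m * p i = if j = i then f j l m else 0 := by
    intro j i l m
    rcases eq_or_ne j i with h | h
    · subst h
      simp only [hpdef, Finset.mul_sum, hmul, if_pos rfl]
      simp [Finset.sum_ite_eq]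
    · simp only [hpdef, Finset.mul_sum, if_neg h]
      rw [Finset.sum_eq_zero]
      intro l' _
      exact hmul' j i l m l' l' h
  have hpp : ∀ i j, p i * p j = if i = j then p i else 0 := by
    intro i j
    have h1 : p i * p j = ∑ l, f i l l * p j := by
      rw [hpdef i, Finset.sum_mul]
    rcases eq_or_ne i j with h | h
    · subst h
      rw [if_pos rfl, h1]
      calc (∑ l, f i l l * p i) = ∑ l, f i l l :=
            Finset.sum_congr rfl fun l _ => by rw [hfp i i l l, if_pos rfl]
        _ = p i := (hpdef i).symm
    · rw [if_neg h, h1, Finset.sum_eq_zero]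
      intro l _
      rw [hfp i j l l, if_neg h]
  have hppi : ∀ i, p i * p i = p i := fun i => (hpp i i).trans (if_pos rfl)
  -- span facts
  have hqspan : q ∈ Submodule.span ℂ {y : MatC r | ∃ i l m, y = f i l m} := hspan q hqF
  have hPq : (∑ i, p i) * q = q ∧ q * (∑ i, p i) = q := by
    refine Submodule.span_induction
      (p := fun x _ => (∑ i, p i) * x = x ∧ x * (∑ i, p i) = x) ?_ ?_ ?_ ?_ hqspan
    · rintro x ⟨i, l, m, rfl⟩
      constructor
      · rw [Finset.sum_mul]
        simp [hpf]
      · rw [Finset.mul_sum]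
        simp [hfp]
    · simp
    · rintro x y _ _ ⟨hx1, hx2⟩ ⟨hy1, hy2⟩
      constructor
      · rw [mul_add, hx1, hy1]
      · rw [add_mul, hx2, hy2]
    · rintro a x _ ⟨hx1, hx2⟩
      constructor
      · rw [mul_smul_comm, hx1]
      · rw [smul_mul_assoc, hx2]
  have hcross : ∀ i j, i ≠ j → p i * q * p j = 0 := by
    intro i j hij
    refine Submodule.span_induction
      (p := fun x _ => p i * x * p j = 0) ?_ ?_ ?_ ?_ hqspan
    · rintro x ⟨k, l, m, rfl⟩
      rw [hpf i k l m]
      rcases eq_or_ne i k with h | h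
      · subst h
        rw [if_pos rfl, hfp i j l m, if_neg hij]
      · rw [if_neg h, zero_mul]
    · simp
    · intro x y _ _ hx hy
      rw [mul_add, add_mul, hx, hy, add_zero]
    · intro a x _ hx
      rw [mul_smul_comm, smul_mul_assoc, hx, smul_zero]
  -- the block components of q
  obtain ⟨Q, hQdef⟩ : ∃ Q : Fin s → MatC r, ∀ i, Q i = p i * q * p i :=
    ⟨fun i => p i * q * p i, fun _ => rfl⟩
  have hqQ : q = ∑ i, Q i := by
    have h1 : (∑ i, p i) * q * (∑ j, p j) = q := by rw [hPq.1, hPq.2]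
    calc q = (∑ i, p i) * q * (∑ j, p j) := h1.symm
      _ = ∑ i, (p i * q * (∑ j, p j)) := by rw [Finset.sum_mul, Finset.sum_mul]
      _ = ∑ i, Q i := by
          refine Finset.sum_congr rfl fun i _ => ?_
          rw [Finset.mul_sum, hQdef i]
          exact Finset.sum_eq_single i (fun j _ hji => hcross i j (Ne.symm hji))
            (fun h => absurd (Finset.mem_univ i) h)
  have hpQ : ∀ i k, p i * Q k = if i = k then Q k else 0 := by
    intro i k
    rw [hQdef k, ← mul_assoc, ← mul_assoc, hpp i k]
    rcases eq_or_ne i k with h | h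
    · subst h; simp [hQdef, mul_assoc]
    · simp [h]
  have hQp : ∀ k i, Q k * p i = if k = i then Q k else 0 := by
    intro k i
    rw [hQdef k, mul_assoc (p k * q), hpp k i]
    rcases eq_or_ne k i with h | h
    · subst h; simp [hQdef, mul_assoc]
    · simp [h]
  have hQQ' : ∀ i j, i ≠ j → Q i * Q j = 0 := by
    intro i j hij
    have h1 : Q i * Q j = (p i * q) * (p i * Q j) := by
      rw [hQdef i, mul_assoc]
    rw [h1, hpQ i j, if_neg hij, mul_zero]
  have hq2 : (∑ i, Q i * Q i) = q := by
    have h1 : (∑ i, Q i) * (∑ j, Q j) = q := by rw [← hqQ]; exact hq_idem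
    rw [← h1, Finset.sum_mul]
    refine Finset.sum_congr rfl fun i _ => ?_
    rw [Finset.mul_sum]
    exact (Finset.sum_eq_single i (fun j _ hji => hQQ' i j (Ne.symm hji))
      (fun h => absurd (Finset.mem_univ i) h)).symm
  have hpQi : ∀ i, p i * Q i = Q i := fun i => (hpQ i i).trans (if_pos rfl)
  have hQpi : ∀ i, Q i * p i = Q i := fun i => (hQp i i).trans (if_pos rfl)
  have hQidem : ∀ k, Q k * Q k = Q k := by
    intro k
    have h2 : p k * (∑ i, Q i * Q i) * p k = Q k := by rw [hq2, ← hQdef k]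
    have h3 : p k * (∑ i, Q i * Q i) * p k = ∑ i, (p k * Q i) * (Q i * p k) := by
      rw [Finset.mul_sum, Finset.sum_mul]
      refine Finset.sum_congr rfl fun i _ => ?_
      rw [← mul_assoc, mul_assoc (p k * Q i)]
    have h4 : (∑ i, (p k * Q i) * (Q i * p k)) = Q k * Q k := by
      refine (Finset.sum_eq_single k (fun i _ hik => ?_) (fun h => absurd (Finset.mem_univ k) h)).trans ?_
      · rw [hpQ k i, if_neg (Ne.symm hik), zero_mul]
      · rw [hpQi k, hQpi k]
    rw [← h4, ← h3, h2]
  have hQsa : ∀ i, star (Q i) = Q i := by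
    intro i
    rw [hQdef i, star_mul, star_mul, hpstar, hq_sa.star_eq, mul_assoc]
  -- the main per-block dichotomy
  have hblock : ∀ i, Q i = 0 ∨ Q i = p i := by
    intro i
    by_cases hz : ∃ l, f i l l = 0
    · left
      obtain ⟨l, hl⟩ := hz
      have hall : ∀ m, f i m m = 0 := by
        intro m
        have h1 : f i m l * f i l m = f i m m := by simpa using hmul i m l l m
        have h2 : f i m l * f i l l = f i m l := by simpa using hmul i m l l l
        calc f i m m = f i m l * f i l m := h1.symm
          _ = (f i m l * f i l l) * f i l m := by rw [h2]
          _ = 0 := by rw [hl, mul_zero, zero_mul]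
      have hpi : p i = 0 := by
        rw [hpdef i]
        exact Finset.sum_eq_zero fun m _ => hall m
      rw [hQdef i, hpi, zero_mul, zero_mul]
    · push_neg at hz
      rcases Nat.eq_zero_or_pos (rr i) with h0 | hposi
      · left
        have hpi : p i = 0 := by
          rw [hpdef i]
          haveI : IsEmpty (Fin (rr i)) := by rw [h0]; infer_instance
          simp
        rw [hQdef i, hpi, zero_mul, zero_mul]
      · -- main case: all diagonal units nonzero
        have l0 : Fin (rr i) := ⟨0, hposi⟩
        -- linear independence gives the cardinality bound
        have hli : LinearIndependent ℂ (fun l : Fin (rr i) => f i l l) := by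
          rw [Fintype.linearIndependent_iff]
          intro g hg m
          have h1 := congrArg (fun z => z * f i m m) hg
          simp only [Finset.sum_mul, smul_mul_assoc, zero_mul] at h1
          have h2 : ∀ l : Fin (rr i), g l • (f i l l * f i m m)
              = if l = m then g l • f i m m else 0 := by
            intro l
            rw [hmul i l l m m]
            rcases eq_or_ne l m with h | h
            · subst h; simp
            · simp [h]
          rw [Finset.sum_congr rfl (fun l _ => h2 l)] at h1
          rw [Finset.sum_ite_eq' Finset.univ m (fun l => g l • f i m m)] at h1
          rw [if_pos (Finset.mem_univ m)] at h1
          rcases smul_eq_zero.mp h1 with h | h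
          · exact h
          · exact absurd h (hz m)
        have hcard : rr i ≤ r * r := by
          simpa [Module.finrank_matrix] using hli.fintype_card_le_finrank
        -- diagonal scalars
        have hscal : ∀ l : Fin (rr i), ∃ c : ℂ, f i l l * q * f i l l = c • f i l l := by
          intro l
          refine Submodule.span_induction
            (p := fun x _ => ∃ c : ℂ, f i l l * x * f i l l = c • f i l l) ?_ ?_ ?_ ?_ hqspan
          · rintro x ⟨k, l', m', rfl⟩
            rcases eq_or_ne i k with h | h
            · subst h
              rw [hmul i l l l' m']
              rcases eq_or_ne l l' with h1 | h1
              · subst h1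
                rw [if_pos rfl, hmul i l m' l l]
                rcases eq_or_ne m' l with h2 | h2
                · subst h2; exact ⟨1, by simp⟩
                · rw [if_neg h2]; exact ⟨0, by simp⟩
              · rw [if_neg h1, zero_mul]; exact ⟨0, by simp⟩
            · rw [hmul' i k l l l' m' h, zero_mul]; exact ⟨0, by simp⟩
          · exact ⟨0, by simp⟩
          · rintro x y _ _ ⟨cx, hx⟩ ⟨cy, hy⟩
            exact ⟨cx + cy, by rw [mul_add, add_mul, hx, hy, add_smul]⟩
          · rintro a x _ ⟨cx, hx⟩
            exact ⟨a * cx, by rw [mul_smul_comm, smul_mul_assoc, hx, smul_smul]⟩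
        choose cc hcc using hscal
        -- off-diagonal bound
        have hB : ∀ l m : Fin (rr i), l ≠ m → ‖f i l l * q * f i m m‖ ≤ α := by
          intro l m hlm
          have hkey : f i l l * (f i l l * q - q * f i l l) * f i m m = f i l l * q * f i m m := by
            have e1 : f i l l * (f i l l * q - q * f i l l) * f i m m
                = f i l l * f i l l * q * f i m m - f i l l * q * (f i l l * f i m m) := by
              noncomm_ring
            rw [e1, hproj_idem i l, hmul i l l m m, if_neg hlm, mul_zero, sub_zero]
          calc ‖f i l l * q * f i m m‖
              = ‖f i l l * (f i l l * q - q * f i l l) * f i m m‖ := by rw [hkey]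
            _ ≤ ‖f i l l * q - q * f i l l‖ :=
                MatC.norm_sandwich _ (hnormf i l l) (hnormf i m m)
            _ ≤ α := le_of_lt (hex i l l)
        -- diagonal comparison bound
        have hD : ∀ l : Fin (rr i), ‖(cc l - cc l0) • f i l l‖ ≤ α := by
          intro l
          have hu1 : f i l0 l * f i l l = f i l0 l := by simpa using hmul i l0 l l l
          have hu2 : f i l0 l0 * f i l0 l = f i l0 l := by simpa using hmul i l0 l0 l0 l
          have hu3 : f i l l0 * f i l0 l = f i l l := by simpa using hmul i l l0 l0 l
          have hX1 : f i l0 l * q * f i l l = cc l • f i l0 l := by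
            calc f i l0 l * q * f i l l = (f i l0 l * f i l l) * q * f i l l := by rw [hu1]
              _ = f i l0 l * (f i l l * q * f i l l) := by noncomm_ring
              _ = f i l0 l * (cc l • f i l l) := by rw [hcc l]
              _ = cc l • f i l0 l := by rw [mul_smul_comm, hu1]
          have hX2 : f i l0 l0 * q * f i l0 l = cc l0 • f i l0 l := by
            calc f i l0 l0 * q * f i l0 l
                = (f i l0 l0 * q * f i l0 l0) * f i l0 l := by
                  rw [mul_assoc (f i l0 l0 * q), hu2]
              _ = (cc l0 • f i l0 l0) * f i l0 l := by rw [hcc l0]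
              _ = cc l0 • f i l0 l := by rw [smul_mul_assoc, hu2]
          have hkey : f i l0 l0 * (f i l0 l * q - q * f i l0 l) * f i l l
              = (cc l - cc l0) • f i l0 l := by
            have e1 : f i l0 l0 * (f i l0 l * q - q * f i l0 l) * f i l l
                = (f i l0 l0 * f i l0 l) * q * f i l l
                  - f i l0 l0 * q * (f i l0 l * f i l l) := by
              noncomm_ring
            rw [e1, hu2, hu1, hX1, hX2, sub_smul]
          have hfinal : (cc l - cc l0) • f i l l = f i l l0 * ((cc l - cc l0) • f i l0 l) := by
            rw [mul_smul_comm, hu3]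
          calc ‖(cc l - cc l0) • f i l l‖
              = ‖f i l l0 * ((cc l - cc l0) • f i l0 l)‖ := by rw [hfinal]
            _ ≤ ‖f i l l0‖ * ‖(cc l - cc l0) • f i l0 l‖ := norm_mul_le _ _
            _ ≤ 1 * ‖(cc l - cc l0) • f i l0 l‖ :=
                mul_le_mul_of_nonneg_right (hnormf i l l0) (norm_nonneg _)
            _ = ‖(cc l - cc l0) • f i l0 l‖ := one_mul _
            _ = ‖f i l0 l0 * (f i l0 l * q - q * f i l0 l) * f i l l‖ := by rw [hkey]
            _ ≤ ‖f i l0 l * q - q * f i l0 l‖ :=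
                MatC.norm_sandwich _ (hnormf i l0 l0) (hnormf i l l)
            _ ≤ α := le_of_lt (hex i l0 l)
        -- sum decomposition and norm bound on d = Q i - cc l0 • p i
        have hQsum : Q i = ∑ l : Fin (rr i), ∑ m : Fin (rr i), f i l l * q * f i m m := by
          rw [hQdef i, hpdef i]
          rw [Finset.sum_mul, Finset.sum_mul]
          refine Finset.sum_congr rfl fun l _ => ?_
          rw [Finset.mul_sum]
        have hdsum : Q i - cc l0 • p i = ∑ l : Fin (rr i), ∑ m : Fin (rr i),
            (f i l l * q * f i m m - (if m = l then cc l0 • f i l l else 0)) := by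
          have e1 : ∀ l : Fin (rr i), (∑ m : Fin (rr i),
              (f i l l * q * f i m m - (if m = l then cc l0 • f i l l else 0)))
              = (∑ m : Fin (rr i), f i l l * q * f i m m) - cc l0 • f i l l := by
            intro l
            rw [Finset.sum_sub_distrib]
            congr 1
            rw [Finset.sum_ite_eq' Finset.univ l (fun _ => cc l0 • f i l l)]
            rw [if_pos (Finset.mem_univ l)]
          rw [Finset.sum_congr rfl (fun l _ => e1 l), Finset.sum_sub_distrib, ← hQsum]
          congr 1
          rw [hpdef i, Finset.smul_sum]
        have hdnorm : ‖Q i - cc l0 • p i‖ ≤ ((rr i : ℝ) * rr i) * α := by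
          have hg : ∀ l m : Fin (rr i),
              ‖f i l l * q * f i m m - (if m = l then cc l0 • f i l l else 0)‖ ≤ α := by
            intro l m
            rcases eq_or_ne m l with h | h
            · subst h
              rw [if_pos rfl, hcc m, ← sub_smul]
              exact hD m
            · rw [if_neg h, sub_zero]
              exact hB l m (Ne.symm h)
          rw [hdsum]
          calc ‖∑ l : Fin (rr i), ∑ m : Fin (rr i),
                (f i l l * q * f i m m - (if m = l then cc l0 • f i l l else 0))‖
              ≤ ∑ l : Fin (rr i), ‖∑ m : Fin (rr i),
                (f i l l * q * f i m m - (if m = l then cc l0 • f i l l else 0))‖ :=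
                norm_sum_le _ _
            _ ≤ ∑ l : Fin (rr i), ∑ m : Fin (rr i),
                ‖f i l l * q * f i m m - (if m = l then cc l0 • f i l l else 0)‖ :=
                Finset.sum_le_sum fun l _ => norm_sum_le _ _
            _ ≤ ∑ _l : Fin (rr i), ∑ _m : Fin (rr i), α :=
                Finset.sum_le_sum fun l _ => Finset.sum_le_sum fun m _ => hg l m
            _ = ((rr i : ℝ) * rr i) * α := by
                simp [Finset.sum_const, Finset.card_univ, nsmul_eq_mul]
                ring
        have hcard2 : ((rr i : ℝ) * rr i) * α ≤ 1/100 := by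
          have h1 : ((rr i:ℝ) * rr i) ≤ ((r:ℝ)*r) * ((r:ℝ)*r) := by
            have h2 : (rr i : ℝ) ≤ (r:ℝ) * r := by exact_mod_cast hcard
            have h3 : (0:ℝ) ≤ (rr i : ℝ) := Nat.cast_nonneg _
            nlinarith [h2, h3]
          rw [hαdef, mul_one_div, div_le_div_iff₀ (by positivity) (by norm_num)]
          nlinarith [h1]
        -- the quadratic estimate
        obtain ⟨d, hddef⟩ : ∃ d : MatC r, d = Q i - cc l0 • p i := ⟨_, rfl⟩
        have hQd : Q i = cc l0 • p i + d := by rw [hddef]; abel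
        have hpd : p i * d = d := by
          rw [hddef, mul_sub, mul_smul_comm, hpQi i, hppi i]
        have hdp : d * p i = d := by
          rw [hddef, sub_mul, smul_mul_assoc, hQpi i, hppi i]
        have hd100 : ‖d‖ ≤ 1/100 := by
          rw [hddef]; exact le_trans hdnorm hcard2
        have hexpand : Q i * Q i
            = (cc l0 * cc l0) • p i + (cc l0 • d + (cc l0 • d + d * d)) := by
          conv_lhs => rw [hQd]
          simp only [add_mul, mul_add, smul_mul_assoc, mul_smul_comm, smul_smul, smul_add]
          rw [hppi i, hpd, hdp]
          abel
        have heq : (cc l0 * cc l0 - cc l0) • p i = (1 - 2 * cc l0) • d - d * d := by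
          have h6 : Q i * Q i - Q i = 0 := by rw [hQidem i, sub_self]
          rw [hexpand] at h6
          conv_lhs at h6 => rw [hQd]
          have h8 := sub_eq_zero.mp h6
          rw [← sub_eq_zero]
          rw [show (cc l0 * cc l0 - cc l0) • p i - ((1 - 2 * cc l0) • d - d * d)
              = ((cc l0 * cc l0) • p i + (cc l0 • d + (cc l0 • d + d * d)))
                - (cc l0 • p i + d) from by module]
          rw [h8, sub_self]
        have hQn : ‖Q i‖ ≤ 1 := MatC.proj_norm_le_one (hQidem i) (hQsa i)
        rcases eq_or_ne (p i) 0 with hpz | hpz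
        · left
          rw [hQdef i, hpz, zero_mul, zero_mul]
        · have hpn : ‖p i‖ = 1 := by
            have h1 : 0 < ‖p i‖ := norm_pos_iff.mpr hpz
            have h2 : ‖p i‖ * ‖p i‖ = ‖p i‖ := by
              conv_rhs => rw [← hppi i]
              rw [← CStarRing.norm_star_mul_self (x := p i), hpstar]
            nlinarith
          have hcb : ‖cc l0‖ ≤ 1 + 1/100 := by
            have h1 : cc l0 • p i = Q i - d := by rw [hddef]; abel
            have h2 : ‖cc l0 • p i‖ = ‖cc l0‖ := by rw [norm_smul, hpn, mul_one]
            have h3 : ‖Q i - d‖ ≤ ‖Q i‖ + ‖d‖ := norm_sub_le _ _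
            rw [← h2, h1]
            linarith
          have hquad : ‖cc l0 * cc l0 - cc l0‖ ≤ 4/100 := by
            have h1 : ‖(cc l0 * cc l0 - cc l0) • p i‖ = ‖cc l0 * cc l0 - cc l0‖ := by
              rw [norm_smul, hpn, mul_one]
            rw [← h1, heq]
            have h2 : ‖(1 - 2 * cc l0) • d - d * d‖
                ≤ ‖(1:ℂ) - 2 * cc l0‖ * ‖d‖ + ‖d‖ * ‖d‖ := by
              refine le_trans (norm_sub_le _ _) ?_
              rw [norm_smul]
              exact add_le_add le_rfl (norm_mul_le d d)
            have h3 : ‖(1:ℂ) - 2 * cc l0‖ ≤ 1 + 2 * ‖cc l0‖ := by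
              calc ‖(1:ℂ) - 2 * cc l0‖ ≤ ‖(1:ℂ)‖ + ‖2 * cc l0‖ := norm_sub_le _ _
                _ = 1 + 2 * ‖cc l0‖ := by
                    rw [norm_one, norm_mul]
                    norm_num
            have h4 := norm_nonneg d
            have h5 := norm_nonneg (cc l0)
            nlinarith [hd100, hcb]
          by_cases hcs : ‖cc l0‖ ≤ 1/2
          · left
            have h1 : ‖Q i‖ < 1 := by
              have h2 : ‖Q i‖ ≤ ‖cc l0 • p i‖ + ‖d‖ := by
                conv_lhs => rw [hQd]
                exact norm_add_le _ _
              rw [norm_smul, hpn, mul_one] at h2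
              linarith [hd100]
            exact MatC.idem_eq_zero_of_norm_lt_one (hQidem i) h1
          · right
            push_neg at hcs
            have h1 : ‖(1:ℂ) - cc l0‖ ≤ 8/100 := by
              have h2 : ‖cc l0 * cc l0 - cc l0‖ = ‖cc l0‖ * ‖cc l0 - 1‖ := by
                rw [show cc l0 * cc l0 - cc l0 = cc l0 * (cc l0 - 1) from by ring, norm_mul]
              have h3 : ‖(1:ℂ) - cc l0‖ = ‖cc l0 - 1‖ := norm_sub_rev _ _
              rw [h3]
              nlinarith [hquad, hcs, norm_nonneg (cc l0 - 1)]
            have hidem2 : (p i - Q i) * (p i - Q i) = p i - Q i := by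
              have e : (p i - Q i) * (p i - Q i)
                  = p i * p i - p i * Q i - Q i * p i + Q i * Q i := by noncomm_ring
              rw [e, hppi i, hpQi i, hQpi i, hQidem i]
              abel
            have hnorm2 : ‖p i - Q i‖ < 1 := by
              have e : p i - Q i = (1 - cc l0) • p i - d := by
                rw [hQd, sub_smul, one_smul]
                abel
              rw [e]
              calc ‖(1 - cc l0) • p i - d‖ ≤ ‖(1 - cc l0) • p i‖ + ‖d‖ := norm_sub_le _ _
                _ = ‖(1:ℂ) - cc l0‖ + ‖d‖ := by rw [norm_smul, hpn, mul_one]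
                _ < 1 := by linarith [hd100, h1]
            have hz2 := MatC.idem_eq_zero_of_norm_lt_one hidem2 hnorm2
            exact (sub_eq_zero.mp hz2).symm
  -- q commutes with every matrix unit, hence with everything in F
  have hcomm : ∀ j l m, f j l m * q = q * f j l m := by
    intro j l m
    rw [hqQ, Finset.mul_sum, Finset.sum_mul]
    refine Finset.sum_congr rfl fun i _ => ?_
    rcases hblock i with h | h
    · rw [h, mul_zero, zero_mul]
    · rw [h, hfp j i l m, hpf i j l m]
      rcases eq_or_ne i j with hij | hij
      · subst hij; simp
      · rw [if_neg hij, if_neg (Ne.symm hij)]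
  intro x hx
  refine Submodule.span_induction (p := fun x _ => q * x = x * q) ?_ ?_ ?_ ?_ (hspan x hx)
  · rintro y ⟨i, l, m, rfl⟩
    exact (hcomm i l m).symm
  · simp
  · intro a b _ _ ha hb
    rw [mul_add, add_mul, ha, hb]
  · intro a y _ hy
    rw [mul_smul_comm, smul_mul_assoc, hy]

end
end

section
/- Let K be a finite abstract simplicial complex and γ_1, …, γ_l mutually distinct k-faces of K such that γ_i ∪ γ_j is not a face of K whenever i ≠ j. Form the iterated subdivision K_l := (…(K_{γ_1})_{γ_2}…)_{γ_l} obtained by successively adjoining each γ_m as a new vertex. Then for all i ≠ j, the pair {γ_i, γ_j} is not a face of K_l. -/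
noncomputable section

def IsSC {W : Type*} (K : Set (Finset W)) : Prop := ∀ γ ∈ K, ∀ δ ⊆ γ, δ ∈ K

def subdivAt {W : Type*} [DecidableEq W] (K : Set (Finset W)) (γb : Finset W) (v : W) :
    Set (Finset W) :=
  {γ ∈ K | ¬ γb ⊆ γ} ∪ {δ | ∃ γ ∈ K, γb ⊆ γ ∧ ∃ ν ∈ γb, δ = insert v (γ.erase ν)}

def liftF {V : Type*} [DecidableEq V] (γ : Finset V) : Finset (V ⊕ Finset V) :=
  γ.image Sum.inl

def liftK {V : Type*} [DecidableEq V] (K : Set (Finset V)) : Set (Finset (V ⊕ Finset V)) :=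
  liftF '' K

/-- The iterated subdivision `K_m = (…(K_{γ₁})_{γ₂}…)_{γ_m}`, successively adjoining the
faces `γ₁, …, γ_l` as new vertices. -/
def iterSubdiv {V : Type} [DecidableEq V] (K : Set (Finset V)) (l : ℕ) (γs : Fin l → Finset V) :
    ℕ → Set (Finset (V ⊕ Finset V))
  | 0 => liftK K
  | m + 1 =>
    if h : m < l then
      subdivAt (iterSubdiv K l γs m) (liftF (γs ⟨m, h⟩)) (Sum.inr (γs ⟨m, h⟩))
    else iterSubdiv K l γs m

/-!
Replacing every new vertex `γ` of a face of `K_m` by the vertices of `γ` yields a face of `K`: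
a face `{γ̄} ∪ (γ \ {ν})` of a subdivision has its vertices among those of the old
face `γ ⊇ γ̄`, and `K` is closed under subsets. The edge `{γᵢ, γⱼ}` would thus give the face
`γᵢ ∪ γⱼ` of `K`.
-/

section Support

variable {V : Type} [DecidableEq V]

def supp (δ : Finset (V ⊕ Finset V)) : Finset V :=
  δ.biUnion (Sum.elim singleton id)

@[simp]
lemma supp_liftF (γ : Finset V) : supp (liftF γ) = γ := by
  ext v; simp [supp, liftF]

lemma supp_mono {δ δ' : Finset (V ⊕ Finset V)} (h : δ ⊆ δ') : supp δ ⊆ supp δ' :=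
  Finset.biUnion_subset_biUnion_of_subset_left _ h

lemma supp_insert_inr (γ : Finset V) (δ : Finset (V ⊕ Finset V)) :
    supp (insert (Sum.inr γ) δ) = γ ∪ supp δ := by
  simp [supp, Finset.biUnion_insert]

lemma supp_singleton_inr (γ : Finset V) : supp {Sum.inr γ} = γ := by
  simp [supp]

lemma subset_supp_of_liftF_subset {γ : Finset V} {δ : Finset (V ⊕ Finset V)}
    (h : liftF γ ⊆ δ) : γ ⊆ supp δ := by
  simpa using supp_mono h

lemma supp_mem_of_mem_subdivAt {K : Set (Finset V)} (hK : IsSC K)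
    {L : Set (Finset (V ⊕ Finset V))} (hL : ∀ δ ∈ L, supp δ ∈ K) (γ : Finset V) :
    ∀ δ ∈ subdivAt L (liftF γ) (Sum.inr γ), supp δ ∈ K := by
  rintro δ (⟨hδ, -⟩ | ⟨δ', hδ', hγδ', ν, -, rfl⟩)
  · exact hL δ hδ
  · refine hK _ (hL δ' hδ') _ ?_
    rw [supp_insert_inr]
    exact Finset.union_subset (subset_supp_of_liftF_subset hγδ')
      (supp_mono (Finset.erase_subset ν δ'))

lemma supp_mem_of_mem_iterSubdiv {K : Set (Finset V)} (hK : IsSC K) {l : ℕ}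
    (γs : Fin l → Finset V) (m : ℕ) : ∀ δ ∈ iterSubdiv K l γs m, supp δ ∈ K := by
  induction m with
  | zero =>
    rintro _ ⟨γ, hγ, rfl⟩
    simpa using hγ
  | succ m ih =>
    rw [iterSubdiv]
    split
    · exact supp_mem_of_mem_subdivAt hK ih _
    · exact ih

end Support

theorem iterSubdiv_no_edge_general {V : Type} [DecidableEq V] (K : Set (Finset V)) (hK : IsSC K)
    (l : ℕ) (γs : Fin l → Finset V)
    (hun : ∀ i j, i ≠ j → (γs i ∪ γs j) ∉ K) :
    ∀ i j, i ≠ j →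
      ({Sum.inr (γs i), Sum.inr (γs j)} : Finset (V ⊕ Finset V)) ∉ iterSubdiv K l γs l := by
  intro i j hij hedge
  have hsupp := supp_mem_of_mem_iterSubdiv hK γs l _ hedge
  rw [supp_insert_inr, supp_singleton_inr] at hsupp
  exact hun i j hij hsupp

/-- **Winter, 5.6 (`sd-l`)**: let `γ₁, …, γ_l` be mutually distinct `k`-faces of `K` such
that `γᵢ ∪ γⱼ ∉ K` for `i ≠ j`.  Then in the iterated subdivision `K_l` no edge joins two
of the new vertices: `{γᵢ, γⱼ} ∉ K_l` for `i ≠ j`. -/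
theorem iterSubdiv_no_edge {V : Type} [DecidableEq V] (K : Set (Finset V)) (hK : IsSC K)
    (k l : ℕ) (γs : Fin l → Finset V) (hinj : Function.Injective γs)
    (hface : ∀ i, γs i ∈ K ∧ (γs i).card = k + 1)
    (hun : ∀ i j, i ≠ j → (γs i ∪ γs j) ∉ K) :
    ∀ i j, i ≠ j →
      ({Sum.inr (γs i), Sum.inr (γs j)} : Finset (V ⊕ Finset V)) ∉ iterSubdiv K l γs l :=
  iterSubdiv_no_edge_general K hK l γs hun

end
end

section
/- Let Ω be a compact Hausdorff space, B a C*-subalgebra of C(Ω, M_r), and define the fiber map B(t) := {b(t) : b ∈ B} ⊆ M_r for t ∈ Ω. Then the algebra of continuous selections {x ∈ C(Ω, M_r) : x(t) ∈ B(t) for all t} equals B if and only if C(Ω)·B = B (B is a C(Ω)-module). -/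
noncomputable section

/-- Pointwise multiplication of an `M_r`-valued continuous function by a scalar-valued
continuous function. -/
def cmul {Ω : Type} [TopologicalSpace Ω] {r : ℕ} (f : C(Ω, ℂ)) (b : C(Ω, MatC r)) :
    C(Ω, MatC r) :=
  ⟨fun t => f t • b t, f.continuous.smul b.continuous⟩

section Aux

attribute [local instance] Matrix.normedAddCommGroup Matrix.normedSpace

/-- The hard direction: if `B` is a closed `C(Ω)`-submodule, every continuous selection
belongs to `B`. -/
lemma selection_mem_of_module {Ω : Type} [TopologicalSpace Ω] [CompactSpace Ω] [T2Space Ω]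
    (r : ℕ) (B : NonUnitalStarSubalgebra ℂ C(Ω, MatC r))
    (hB : IsClosed (B : Set C(Ω, MatC r)))
    (hmod : ∀ (f : C(Ω, ℂ)) (b : C(Ω, MatC r)), b ∈ B → cmul f b ∈ B)
    (x : C(Ω, MatC r)) (hx : ∀ t : Ω, ∃ b ∈ B, b t = x t) :
    x ∈ (B : Set C(Ω, MatC r)) := by
  have hcl : x ∈ closure (B : Set C(Ω, MatC r)) := by
    letI : PseudoMetricSpace C(Ω, MatC r) := @ContinuousMap.instPseudoMetricSpace Ω (MatC r) _ _ _
    refine (Metric.mem_closure_iff (α := C(Ω, MatC r))).2 ?_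
    intro ε hε
    -- choose, for each `t`, an element of `B` agreeing with `x` at `t`
    choose b hbB hbx using hx
    -- the open sets where `b t` is `ε/2`-close to `x`
    set U : Ω → Set Ω := fun t => {s | dist (b t s) (x s) < ε / 2} with hU
    have hUopen : ∀ t, IsOpen (U t) :=
      fun t => isOpen_lt (Continuous.dist (b t).continuous x.continuous) continuous_const
    have hUmem : ∀ t, t ∈ U t := by
      intro t
      simp only [hU, Set.mem_setOf_eq, hbx t, dist_self]
      positivity
    obtain ⟨T, hT⟩ := isCompact_univ.elim_finite_subcover U hUopen
      (fun t _ => Set.mem_iUnion.2 ⟨t, hUmem t⟩)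
    set n := T.card with hn
    set e := T.equivFin with he
    set s : Fin n → Set Ω := fun i => U ((e.symm i : Ω)) with hs
    have hsopen : ∀ i, IsOpen (s i) := fun i => hUopen _
    have hcov : (Set.univ : Set Ω) ⊆ ⋃ i, s i := by
      intro t ht
      obtain ⟨u, hu, htu⟩ := Set.mem_iUnion₂.1 (hT ht)
      exact Set.mem_iUnion.2 ⟨e ⟨u, hu⟩, by simpa [hs] using htu⟩
    obtain ⟨f, hfsupp, hfsum, hf01, -⟩ :=
      exists_continuous_sum_one_of_isOpen_isCompact hsopen isCompact_univ hcov
    -- complexified partition of unity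
    set g : Fin n → C(Ω, ℂ) := fun i =>
      (⟨Complex.ofReal, Complex.continuous_ofReal⟩ : C(ℝ, ℂ)).comp (f i) with hg
    set y : C(Ω, MatC r) := ∑ i, cmul (g i) (b ((e.symm i : Ω))) with hy
    have hyB : y ∈ B := by
      refine sum_mem (fun i _ => hmod _ _ (hbB _))
    refine ⟨y, hyB, ?_⟩
    have hdist : dist x y ≤ ε / 2 := by
      refine ContinuousMap.dist_le (by positivity) |>.2 fun t => ?_
      have hsum1 : ∑ i, f i t = 1 := by
        have := hfsum (Set.mem_univ t)
        simpa using this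
      have hxy : x t - y t = ∑ i, ((f i t : ℂ)) • (x t - b ((e.symm i : Ω)) t) := by
        have hyt : y t = ∑ i, ((f i t : ℂ)) • b ((e.symm i : Ω)) t := by
          simp [hy, cmul, hg]
        have hxt : x t = ∑ i, ((f i t : ℂ)) • x t := by
          rw [← Finset.sum_smul]
          have : (∑ i, ((f i t : ℂ))) = 1 := by
            rw [← Complex.ofReal_sum, hsum1, Complex.ofReal_one]
          rw [this, one_smul]
        rw [hyt]
        nth_rewrite 1 [hxt]
        rw [← Finset.sum_sub_distrib]
        simp [smul_sub]
      change dist (x t) (y t) ≤ ε / 2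
      rw [dist_eq_norm, hxy]
      calc ‖∑ i, ((f i t : ℂ)) • (x t - b ((e.symm i : Ω)) t)‖
          ≤ ∑ i, ‖((f i t : ℂ)) • (x t - b ((e.symm i : Ω)) t)‖ := norm_sum_le _ _
        _ ≤ ∑ i, f i t * (ε / 2) := by
            refine Finset.sum_le_sum fun i _ => ?_
            rw [norm_smul, Complex.norm_real, Real.norm_eq_abs,
              abs_of_nonneg (hf01 i t).1]
            by_cases hfi : f i t = 0
            · simp [hfi]
            · have ht : t ∈ s i := hfsupp i (subset_tsupport _ hfi)
              have : ‖x t - b ((e.symm i : Ω)) t‖ ≤ ε / 2 := by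
                rw [← dist_eq_norm, dist_comm]
                exact le_of_lt ht
              exact mul_le_mul_of_nonneg_left this (hf01 i t).1
        _ = ε / 2 := by rw [← Finset.sum_mul, hsum1, one_mul]
    linarith
  rwa [hB.closure_eq] at hcl

end Aux

/-- **Winter, 3.3 (`fibers`)**: let `B` be a C*-subalgebra of `C(Ω, M_r)` and let
`B(t) := {b(t) : b ∈ B}` be its fibers.  Then the algebra of continuous selections
`{x : ∀ t, x(t) ∈ B(t)}` equals `B` if and only if `B` is a `C(Ω)`-module. -/
theorem selections_eq_iff_module {Ω : Type} [TopologicalSpace Ω] [CompactSpace Ω] [T2Space Ω]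
    (r : ℕ) (B : NonUnitalStarSubalgebra ℂ C(Ω, MatC r))
    (hB : IsClosed (B : Set C(Ω, MatC r))) :
    {x : C(Ω, MatC r) | ∀ t : Ω, ∃ b ∈ B, b t = x t} = (B : Set C(Ω, MatC r)) ↔
      ∀ (f : C(Ω, ℂ)) (b : C(Ω, MatC r)), b ∈ B → cmul f b ∈ B := by
  constructor
  · intro h f b hb
    have : cmul f b ∈ {x : C(Ω, MatC r) | ∀ t : Ω, ∃ b ∈ B, b t = x t} := by
      intro t
      exact ⟨f t • b, SMulMemClass.smul_mem (f t) hb, rfl⟩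
    rwa [h] at this
  · intro hmod
    ext x
    constructor
    · intro hx
      exact selection_mem_of_module r B hB hmod x hx
    · intro hx t
      exact ⟨x, hx, rfl⟩

end
end

section
/- Let K be a finite abstract simplicial complex on vertex set Σ⁺ = Σ^{(1)} ⊔ Σ^{(2)} ⊔ {*} such that every face contained in Σ has at most n+1 vertices, and let J = K ∩ Δ^{Σ^{(1)}} be the subcomplex generated by Σ^{(1)}. Suppose the canonical covering of |K| restricted to Σ^{(1)} is n-decomposable (i.e. there is a partition Σ^{(1)} = I_0 ⊔ … ⊔ I_n such that no face of K contains two distinct vertices from the same I_j). Then there exists a simplicial complex Sd_J K with vertex set Γ such that: (i) Σ⁺ ⊆ Γ ⊆ {faces of K}, and every γ ∈ Γ \ Σ⁺ meets Σ^{(2)}; (ii) mapping each γ ∈ Γ to the barycenter of the corresponding face of |K| induces a linear homeomorphism |Sd_J K| → |K|; (iii) Sd_J K ∩ Δ^{Σ^{(1)}} = J; and (iv) the 1-skeleton of Sd_J K restricted to Γ \ {*} is (n+1)-colourable, i.e. there is a partition Γ \ {*} = I'_0 ⊔ … ⊔ I'_n such that no face of Sd_J K contains two distinct elements of the same I'_j.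 -/
noncomputable section

def SCvertices {W : Type*} (K : Set (Finset W)) : Set W := {v | {v} ∈ K}

def geomReal {W : Type*} [Fintype W] (K : Set (Finset W)) : Set (W → ℝ) :=
  {t | (∀ v, 0 ≤ t v) ∧ (∑ v, t v) = 1 ∧ ∃ γ ∈ K, ∀ v, t v ≠ 0 → v ∈ γ}

/-- The vertex universe `Σ⁺ = Σ⁽¹⁾ ⊔ Σ⁽²⁾ ⊔ {*}`, with `* = none`. -/
abbrev VStar (S1 S2 : Type) : Type := Option (S1 ⊕ S2)

set_option linter.unusedSectionVars false
set_option maxHeartbeats 1000000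

namespace RelBary

open Finset
open scoped Classical

variable {V : Type*} [Fintype V] [DecidableEq V]

/-- A face of the subdivision: old vertices `δ` plus barycenters of the chain `C`. -/
def Face (δ : Finset V) (C : Finset (Finset V)) : Finset (V ⊕ Finset V) :=
  δ.image Sum.inl ∪ C.image Sum.inr

@[simp] lemma mem_Face_inl {δ : Finset V} {C : Finset (Finset V)} {v : V} :
    Sum.inl v ∈ Face δ C ↔ v ∈ δ := by simp [Face]

@[simp] lemma mem_Face_inr {δ : Finset V} {C : Finset (Finset V)} {γ : Finset V} :
    Sum.inr γ ∈ Face δ C ↔ γ ∈ C := by simp [Face]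

/-- Admissibility of the data `(δ, C)` for a face of the relative subdivision. -/
def Good (K S : Set (Finset V)) (δ : Finset V) (C : Finset (Finset V)) : Prop :=
  (∀ γ ∈ C, γ ∈ S) ∧ (∀ γ ∈ C, ∀ γ' ∈ C, γ ⊆ γ' ∨ γ' ⊆ γ) ∧
  (δ ∪ C.sup id ∈ K) ∧ (∀ σ ∈ S, ¬ σ ⊆ δ) ∧
  (∀ γ ∈ C, ∀ σ ∈ S, σ ⊆ δ ∪ γ → σ ⊆ γ)

/-- The relative subdivision of `K` at the set of faces `S`. -/
def Sd (K S : Set (Finset V)) : Set (Finset (V ⊕ Finset V)) :=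
  {F | ∃ δ C, Good K S δ C ∧ F = Face δ C}

/-- cone over the geometric realization (drop the normalization). -/
def cone {U : Type*} [Fintype U] (K : Set (Finset U)) : Set (U → ℝ) :=
  {t | (∀ w, 0 ≤ t w) ∧ ∃ γ ∈ K, ∀ w, t w ≠ 0 → w ∈ γ}

def suppV (x : V → ℝ) : Finset V := univ.filter fun v => x v ≠ 0

def suppL (t : V ⊕ Finset V → ℝ) : Finset V := univ.filter fun v => t (Sum.inl v) ≠ 0

def suppR (t : V ⊕ Finset V → ℝ) : Finset (Finset V) := univ.filter fun γ => t (Sum.inr γ) ≠ 0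

@[simp] lemma mem_suppV {x : V → ℝ} {v : V} : v ∈ suppV x ↔ x v ≠ 0 := by simp [suppV]
@[simp] lemma mem_suppL {t : V ⊕ Finset V → ℝ} {v : V} : v ∈ suppL t ↔ t (Sum.inl v) ≠ 0 := by
  simp [suppL]
@[simp] lemma mem_suppR {t : V ⊕ Finset V → ℝ} {γ : Finset V} :
    γ ∈ suppR t ↔ t (Sum.inr γ) ≠ 0 := by simp [suppR]

/-- The barycentric projection map. -/
def Phi (t : V ⊕ Finset V → ℝ) : V → ℝ := fun v =>
  t (Sum.inl v) + ∑ γ : Finset V, if v ∈ γ then t (Sum.inr γ) / (γ.card : ℝ) else 0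

lemma good_mono {K S : Set (Finset V)} {δ δ' : Finset V} {C C' : Finset (Finset V)}
    (hK : IsSC K) (h : Good K S δ C) (hδ : δ' ⊆ δ) (hC : C' ⊆ C) : Good K S δ' C' := by
  obtain ⟨h1, h2, h3, h4, h5⟩ := h
  refine ⟨fun γ hγ => h1 γ (hC hγ), fun γ hγ γ' hγ' => h2 γ (hC hγ) γ' (hC hγ'),
    hK _ h3 _ (union_subset_union hδ (sup_mono hC)),
    fun σ hσ hsub => h4 σ hσ (hsub.trans hδ),
    fun γ hγ σ hσ hsub => h5 γ (hC hγ) σ hσ (hsub.trans (union_subset_union hδ Subset.rfl))⟩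

lemma sd_isSC {K S : Set (Finset V)} (hK : IsSC K) : IsSC (Sd K S) := by
  rintro F ⟨δ, C, hgood, rfl⟩ G hG
  refine ⟨δ.filter (fun v => Sum.inl v ∈ G), C.filter (fun γ => Sum.inr γ ∈ G),
    good_mono hK hgood (filter_subset _ _) (filter_subset _ _), ?_⟩
  ext w
  cases w with
  | inl v =>
    simp only [mem_Face_inl, mem_filter]
    exact ⟨fun h => ⟨mem_Face_inl.mp (hG h), h⟩, fun h => h.2⟩
  | inr γ =>
    simp only [mem_Face_inr, mem_filter]
    exact ⟨fun h => ⟨mem_Face_inr.mp (hG h), h⟩, fun h => h.2⟩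


lemma Phi_nonneg {t : V ⊕ Finset V → ℝ} (h : ∀ w, 0 ≤ t w) (v : V) : 0 ≤ Phi t v := by
  refine add_nonneg (h _) (Finset.sum_nonneg fun γ _ => ?_)
  split_ifs
  · exact div_nonneg (h _) (Nat.cast_nonneg _)
  · exact le_rfl

lemma inl_le_Phi {t : V ⊕ Finset V → ℝ} (h : ∀ w, 0 ≤ t w) (v : V) :
    t (Sum.inl v) ≤ Phi t v :=
  le_add_of_nonneg_right (Finset.sum_nonneg fun γ _ => by
    split_ifs
    · exact div_nonneg (h _) (Nat.cast_nonneg _)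
    · exact le_rfl)

lemma inr_le_Phi {t : V ⊕ Finset V → ℝ} (h : ∀ w, 0 ≤ t w) {v : V} {γ : Finset V}
    (hv : v ∈ γ) : t (Sum.inr γ) / (γ.card : ℝ) ≤ Phi t v := by
  have h1 : (if v ∈ γ then t (Sum.inr γ) / (γ.card : ℝ) else 0)
      ≤ ∑ γ' : Finset V, if v ∈ γ' then t (Sum.inr γ') / (γ'.card : ℝ) else 0 :=
    Finset.single_le_sum (f := fun γ' => if v ∈ γ' then t (Sum.inr γ') / (γ'.card : ℝ) else 0)
      (fun γ' _ => by split_ifs; exacts [div_nonneg (h _) (Nat.cast_nonneg _), le_rfl])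
      (mem_univ γ)
  rw [if_pos hv] at h1
  exact le_add_of_nonneg_of_le (h _) h1

lemma Phi_supp {t : V ⊕ Finset V → ℝ} {δ : Finset V} {C : Finset (Finset V)}
    (hδ : ∀ v, t (Sum.inl v) ≠ 0 → v ∈ δ)
    (hC : ∀ γ, t (Sum.inr γ) ≠ 0 → γ ∈ C) {v : V} (hv : Phi t v ≠ 0) :
    v ∈ δ ∪ C.sup id := by
  by_contra hvn
  apply hv
  have h1 : t (Sum.inl v) = 0 := by
    by_contra h; exact hvn (mem_union_left _ (hδ v h))
  show t (Sum.inl v) + _ = 0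
  rw [h1, zero_add]
  refine Finset.sum_eq_zero fun γ _ => ?_
  split_ifs with hvγ
  · have h0 : t (Sum.inr γ) = 0 := by
      by_contra h
      exact hvn (mem_union_right _ ((Finset.le_sup (f := id) (hC γ h)) hvγ))
    rw [h0, zero_div]
  · rfl

lemma Phi_update_inr (t : V ⊕ Finset V → ℝ) (g : Finset V) (a : ℝ) (v : V) :
    Phi (Function.update t (Sum.inr g) a) v
      = Phi t v + (if v ∈ g then (a - t (Sum.inr g)) / (g.card : ℝ) else 0) := by
  simp only [Phi]
  rw [Function.update_of_ne (by simp)]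
  have hsplit : ∀ (s : V ⊕ Finset V → ℝ),
      (∑ γ : Finset V, if v ∈ γ then s (Sum.inr γ) / (γ.card : ℝ) else 0)
        = (if v ∈ g then s (Sum.inr g) / (g.card : ℝ) else 0)
          + ∑ γ ∈ univ.erase g, (if v ∈ γ then s (Sum.inr γ) / (γ.card : ℝ) else 0) :=
    fun s => (Finset.add_sum_erase _ _ (mem_univ g)).symm
  rw [hsplit, hsplit t]
  have herase : (∑ γ ∈ univ.erase g,
        (if v ∈ γ then (Function.update t (Sum.inr g) a) (Sum.inr γ) / (γ.card : ℝ) else 0))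
      = ∑ γ ∈ univ.erase g, (if v ∈ γ then t (Sum.inr γ) / (γ.card : ℝ) else 0) :=
    Finset.sum_congr rfl fun γ hγ => by
      rw [Function.update_of_ne (by simp [Finset.ne_of_mem_erase hγ])]
  rw [herase, Function.update_self]
  split_ifs with hvg
  · rw [sub_div]; ring
  · ring

lemma Phi_sum {t : V ⊕ Finset V → ℝ} (h0 : t (Sum.inr ∅) = 0) :
    ∑ v, Phi t v = ∑ w, t w := by
  rw [Fintype.sum_sum_type]
  simp only [Phi]
  rw [Finset.sum_add_distrib]
  congr 1
  rw [Finset.sum_comm]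
  refine Finset.sum_congr rfl fun γ _ => ?_
  rw [Finset.sum_ite_mem, univ_inter, Finset.sum_const, nsmul_eq_mul]
  rcases eq_or_ne γ ∅ with rfl | hne
  · simp [h0]
  · have hc : (γ.card : ℝ) ≠ 0 := Nat.cast_ne_zero.mpr (fun h => hne (card_eq_zero.mp h))
    rw [mul_div_cancel₀ _ hc]

lemma chain_sup_mem {C : Finset (Finset V)} (hne : C.Nonempty)
    (hch : ∀ γ ∈ C, ∀ γ' ∈ C, γ ⊆ γ' ∨ γ' ⊆ γ) : C.sup id ∈ C := by
  rw [← Finset.sup'_eq_sup hne id]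
  refine Finset.sup'_mem {x | x ∈ C} (fun a ha b hb => ?_) C hne id (fun γ hγ => hγ)
  rcases hch a ha b hb with h | h
  · simpa [sup_eq_right.mpr (Finset.le_iff_subset.mpr h)] using hb
  · simpa [sup_eq_left.mpr (Finset.le_iff_subset.mpr h)] using ha



lemma cone_good {K S : Set (Finset V)} (hK : IsSC K) {t : V ⊕ Finset V → ℝ}
    (ht : t ∈ cone (Sd K S)) : Good K S (suppL t) (suppR t) := by
  obtain ⟨h0, F, ⟨δ, C, hgood, rfl⟩, hsupp⟩ := ht
  refine good_mono hK hgood ?_ ?_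
  · intro v hv
    exact mem_Face_inl.mp (hsupp _ (mem_suppL.mp hv))
  · intro γ hγ
    exact mem_Face_inr.mp (hsupp _ (mem_suppR.mp hγ))

lemma exists_pure {K S : Set (Finset V)} {δ : Finset V} {C : Finset (Finset V)}
    (hgood : Good K S δ C) {g : Finset V} (hg : g ∈ C) (hgmax : ∀ γ ∈ C, γ ⊆ g) :
    ∃ v₀ ∈ g, v₀ ∉ δ ∧ ∀ γ ∈ C, γ ≠ g → v₀ ∉ γ := by
  obtain ⟨h1, h2, h3, h4, h5⟩ := hgood
  by_cases hCe : (C.erase g).Nonempty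
  · have hγ₂C : (C.erase g).sup id ∈ C.erase g :=
      chain_sup_mem hCe (fun γ hγ γ' hγ' =>
        h2 γ (mem_of_mem_erase hγ) γ' (mem_of_mem_erase hγ'))
    set γ₂ := (C.erase g).sup id with hγ₂def
    have hne : γ₂ ≠ g := ne_of_mem_erase hγ₂C
    have hsub : ¬ g ⊆ δ ∪ γ₂ := by
      intro hsub
      exact hne (subset_antisymm (hgmax γ₂ (mem_of_mem_erase hγ₂C))
        (h5 γ₂ (mem_of_mem_erase hγ₂C) g (h1 g hg) hsub))
    obtain ⟨v₀, hv₀g, hv₀n⟩ := Finset.not_subset.mp hsub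
    refine ⟨v₀, hv₀g, fun hδ => hv₀n (mem_union_left _ hδ), fun γ hγC hγne hvγ => ?_⟩
    exact hv₀n (mem_union_right _ ((Finset.le_sup (f := id) (mem_erase.mpr ⟨hγne, hγC⟩)) hvγ))
  · obtain ⟨v₀, hv₀g, hv₀n⟩ := Finset.not_subset.mp (h4 g (h1 g hg))
    refine ⟨v₀, hv₀g, hv₀n, fun γ hγ hne _ => ?_⟩
    exact hCe ⟨γ, mem_erase.mpr ⟨hne, hγ⟩⟩

lemma Phi_eq_single {t : V ⊕ Finset V → ℝ} {g : Finset V} {v₀ : V}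
    (h1 : t (Sum.inl v₀) = 0)
    (h2 : ∀ γ, t (Sum.inr γ) ≠ 0 → γ = g ∨ v₀ ∉ γ) (hv : v₀ ∈ g) :
    Phi t v₀ = t (Sum.inr g) / (g.card : ℝ) := by
  show t (Sum.inl v₀) + _ = _
  rw [h1, zero_add, Finset.sum_eq_single g]
  · rw [if_pos hv]
  · intro γ _ hne
    split_ifs with h
    · rcases eq_or_ne (t (Sum.inr γ)) 0 with h0 | h0
      · rw [h0, zero_div]
      · rcases h2 γ h0 with rfl | hv'
        · exact absurd rfl hne
        · exact absurd h hv'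
    · rfl
  · intro h; exact absurd (mem_univ g) h

/-- Key step for injectivity: the top chain element and its weight are determined. -/
lemma inj_step {K S : Set (Finset V)} (hK : IsSC K) (hS1 : ∀ σ ∈ S, σ.Nonempty)
    {t t' : V ⊕ Finset V → ℝ} (ht : t ∈ cone (Sd K S)) (ht' : t' ∈ cone (Sd K S))
    (heq : Phi t = Phi t') (hne : (suppR t).Nonempty) :
    ∃ g, g ∈ suppR t ∧ g ∈ suppR t' ∧ t (Sum.inr g) = t' (Sum.inr g) := by
  have gt := cone_good hK ht
  have gt' := cone_good hK ht'
  -- data about the top of t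
  have main : ∀ (s s' : V ⊕ Finset V → ℝ), s ∈ cone (Sd K S) → s' ∈ cone (Sd K S) →
      Phi s = Phi s' → (suppR s).Nonempty →
      (suppR s').Nonempty ∧ (suppR s).sup id ⊆ (suppR s').sup id ∧
      ∃ v₀ ∈ (suppR s).sup id, Phi s v₀ = s (Sum.inr ((suppR s).sup id)) / (((suppR s).sup id).card : ℝ) := by
    intro s s' hs hs' hPhi hsne
    have gs := cone_good hK hs
    have gs' := cone_good hK hs'
    set g := (suppR s).sup id with hgdef
    have hgmem : g ∈ suppR s := chain_sup_mem hsne gs.2.1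
    have hgS : g ∈ S := gs.1 g hgmem
    have hgmax : ∀ γ ∈ suppR s, γ ⊆ g := fun γ hγ => Finset.le_sup (f := id) hγ
    obtain ⟨v₀, hv₀g, hv₀δ, hv₀C⟩ := exists_pure gs hgmem hgmax
    have hv₀l : s (Sum.inl v₀) = 0 := by
      by_contra h; exact hv₀δ (mem_suppL.mpr h)
    have hval : Phi s v₀ = s (Sum.inr g) / (g.card : ℝ) :=
      Phi_eq_single hv₀l (fun γ h0 => by
        rcases eq_or_ne γ g with rfl | hγne
        · exact Or.inl rfl
        · exact Or.inr (hv₀C γ (mem_suppR.mpr h0) hγne)) hv₀g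
    have hgpos : (0:ℝ) < s (Sum.inr g) :=
      lt_of_le_of_ne (hs.1 _) (Ne.symm (mem_suppR.mp hgmem))
    have hcpos : (0:ℝ) < (g.card : ℝ) := by
      have := Finset.card_pos.mpr (hS1 g hgS)
      exact_mod_cast this
    -- every vertex of g is in the support of Phi s' = Phi s
    have hsub : ∀ v ∈ g, v ∈ suppL s' ∪ (suppR s').sup id := by
      intro v hv
      refine Phi_supp (fun v h => mem_suppL.mpr h) (fun γ h => mem_suppR.mpr h) ?_
      rw [← hPhi]
      exact ne_of_gt (lt_of_lt_of_le (div_pos hgpos hcpos) (inr_le_Phi hs.1 hv))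
    have hs'ne : (suppR s').Nonempty := by
      rcases Finset.eq_empty_or_nonempty (suppR s') with he | h
      · exfalso
        apply gs'.2.2.2.1 g hgS
        intro v hv
        have := hsub v hv
        rw [he] at this
        simpa using this
      · exact h
    refine ⟨hs'ne, ?_, v₀, hv₀g, hval⟩
    have hg'mem : (suppR s').sup id ∈ suppR s' := chain_sup_mem hs'ne gs'.2.1
    refine gs'.2.2.2.2 _ hg'mem g hgS ?_
    intro v hv; exact hsub v hv
  obtain ⟨ht'ne, hsub, v₀, hv₀, hval⟩ := main t t' ht ht' heq hne
  obtain ⟨htne2, hsub', v₀', hv₀', hval'⟩ := main t' t ht' ht heq.symm ht'ne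
  have hgg : (suppR t).sup id = (suppR t').sup id := subset_antisymm hsub hsub'
  set g := (suppR t).sup id with hgdef
  have hgmem : g ∈ suppR t := chain_sup_mem hne (cone_good hK ht).2.1
  have hgmem' : g ∈ suppR t' := hgg ▸ chain_sup_mem ht'ne (cone_good hK ht').2.1
  refine ⟨g, hgmem, hgmem', ?_⟩
  have hcpos : (0:ℝ) < (g.card : ℝ) := by
    have := Finset.card_pos.mpr (hS1 g ((cone_good hK ht).1 g hgmem))
    exact_mod_cast this
  rw [← hgg] at hval' hv₀'
  have h1 : t (Sum.inr g) / (g.card : ℝ) = Phi t' v₀ := by rw [← hval, heq]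
  have h2 : t' (Sum.inr g) / (g.card : ℝ) = Phi t v₀' := by rw [← hval', heq]
  have hle1 : t' (Sum.inr g) / (g.card : ℝ) ≤ t (Sum.inr g) / (g.card : ℝ) := by
    rw [h1]; exact inr_le_Phi ht'.1 hv₀
  have hle2 : t (Sum.inr g) / (g.card : ℝ) ≤ t' (Sum.inr g) / (g.card : ℝ) := by
    rw [h2]; exact inr_le_Phi ht.1 hv₀'
  have := le_antisymm hle2 hle1
  have hc := ne_of_gt hcpos
  field_simp at this
  exact this

lemma suppR_update_zero (t : V ⊕ Finset V → ℝ) (g : Finset V) :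
    suppR (Function.update t (Sum.inr g) 0) = (suppR t).erase g := by
  ext γ
  rcases eq_or_ne γ g with rfl | hne
  · simp [Function.update_self]
  · simp [Function.update_of_ne (fun h => hne (Sum.inr.inj h)), hne]

lemma update_mem_cone {K S : Set (Finset V)} {t : V ⊕ Finset V → ℝ}
    (ht : t ∈ cone (Sd K S)) (g : Finset V) :
    Function.update t (Sum.inr g) 0 ∈ cone (Sd K S) := by
  obtain ⟨h0, F, hF, hsupp⟩ := ht
  refine ⟨fun w => ?_, F, hF, fun w hw => ?_⟩
  · rcases eq_or_ne w (Sum.inr g) with rfl | hne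
    · rw [Function.update_self]
    · rw [Function.update_of_ne hne]; exact h0 w
  · rcases eq_or_ne w (Sum.inr g) with rfl | hne
    · rw [Function.update_self] at hw; exact absurd rfl hw
    · rw [Function.update_of_ne hne] at hw; exact hsupp w hw

lemma Phi_eq_inl {t : V ⊕ Finset V → ℝ} (h : ∀ γ : Finset V, t (Sum.inr γ) = 0) (v : V) :
    Phi t v = t (Sum.inl v) := by
  show t (Sum.inl v) + _ = _
  rw [Finset.sum_eq_zero fun γ _ => by rw [h γ, zero_div]; exact ite_self 0, add_zero]

lemma phi_inj {K S : Set (Finset V)} (hK : IsSC K) (hS1 : ∀ σ ∈ S, σ.Nonempty) :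
    ∀ t ∈ cone (Sd K S), ∀ t' ∈ cone (Sd K S), Phi t = Phi t' → t = t' := by
  suffices H : ∀ N : ℕ, ∀ t ∈ cone (Sd K S), ∀ t' ∈ cone (Sd K S),
      Phi t = Phi t' → (suppR t).card + (suppR t').card ≤ N → t = t' by
    intro t ht t' ht' h; exact H _ t ht t' ht' h le_rfl
  intro N
  induction N with
  | zero =>
    intro t ht t' ht' heq hcard
    have h1 : suppR t = ∅ := card_eq_zero.mp (by omega)
    have h2 : suppR t' = ∅ := card_eq_zero.mp (by omega)
    have e1 : ∀ γ : Finset V, t (Sum.inr γ) = 0 := fun γ => by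
      by_contra h; exact (by simp [h1] : γ ∉ suppR t) (mem_suppR.mpr h)
    have e2 : ∀ γ : Finset V, t' (Sum.inr γ) = 0 := fun γ => by
      by_contra h; exact (by simp [h2] : γ ∉ suppR t') (mem_suppR.mpr h)
    funext w
    cases w with
    | inl v =>
      have := congrFun heq v
      rwa [Phi_eq_inl e1, Phi_eq_inl e2] at this
    | inr γ => rw [e1 γ, e2 γ]
  | succ N ih =>
    intro t ht t' ht' heq hcard
    rcases Finset.eq_empty_or_nonempty (suppR t) with hte | htne
    · rcases Finset.eq_empty_or_nonempty (suppR t') with ht'e | ht'ne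
      · have e1 : ∀ γ : Finset V, t (Sum.inr γ) = 0 := fun γ => by
          by_contra h; exact (by simp [hte] : γ ∉ suppR t) (mem_suppR.mpr h)
        have e2 : ∀ γ : Finset V, t' (Sum.inr γ) = 0 := fun γ => by
          by_contra h; exact (by simp [ht'e] : γ ∉ suppR t') (mem_suppR.mpr h)
        funext w
        cases w with
        | inl v =>
          have := congrFun heq v
          rwa [Phi_eq_inl e1, Phi_eq_inl e2] at this
        | inr γ => rw [e1 γ, e2 γ]
      · obtain ⟨g, hg', hg, _⟩ := inj_step hK hS1 ht' ht heq.symm ht'ne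
        rw [hte] at hg
        exact absurd hg (Finset.notMem_empty g)
    · obtain ⟨g, hg, hg', hval⟩ := inj_step hK hS1 ht ht' heq htne
      set t₂ := Function.update t (Sum.inr g) 0 with ht₂def
      set t₂' := Function.update t' (Sum.inr g) 0 with ht₂'def
      have ht₂ : t₂ ∈ cone (Sd K S) := update_mem_cone ht g
      have ht₂' : t₂' ∈ cone (Sd K S) := update_mem_cone ht' g
      have heq₂ : Phi t₂ = Phi t₂' := by
        funext v
        rw [ht₂def, ht₂'def, Phi_update_inr, Phi_update_inr, heq, hval]
      have hc₂ : (suppR t₂).card + (suppR t₂').card ≤ N := by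
        rw [ht₂def, ht₂'def, suppR_update_zero, suppR_update_zero,
          card_erase_of_mem hg, card_erase_of_mem hg']
        have c1 : 1 ≤ (suppR t).card := card_pos.mpr ⟨g, hg⟩
        have c2 : 1 ≤ (suppR t').card := card_pos.mpr ⟨g, hg'⟩
        omega
      have hind := ih t₂ ht₂ t₂' ht₂' heq₂ hc₂
      funext w
      rcases eq_or_ne w (Sum.inr g) with rfl | hne
      · exact hval
      · have := congrFun hind w
        rwa [ht₂def, ht₂'def, Function.update_of_ne hne, Function.update_of_ne hne] at this

lemma phi_surj_base {K S : Set (Finset V)} {x : V → ℝ} (hx0 : ∀ v, 0 ≤ x v)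
    (hxK : suppV x ∈ K) (hex : ¬ ∃ σ ∈ S, σ ⊆ suppV x) :
    ∃ t δ C, Good K S δ C ∧ (∀ w, 0 ≤ t w) ∧ (∀ v, t (Sum.inl v) ≠ 0 → v ∈ δ) ∧
      (∀ γ, t (Sum.inr γ) ≠ 0 → γ ∈ C) ∧ δ ∪ C.sup id = suppV x ∧ Phi t = x := by
  refine ⟨Sum.elim x 0, suppV x, ∅, ?_, ?_, ?_, ?_, ?_, ?_⟩
  · refine ⟨fun γ hγ => absurd hγ (Finset.notMem_empty γ),
      fun γ hγ => absurd hγ (Finset.notMem_empty γ), ?_,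
      fun σ hσ hsub => hex ⟨σ, hσ, hsub⟩, fun γ hγ => absurd hγ (Finset.notMem_empty γ)⟩
    simpa using hxK
  · intro w; cases w with
    | inl v => exact hx0 v
    | inr γ => exact le_rfl
  · intro v hv; exact mem_suppV.mpr hv
  · intro γ hγ; exact absurd rfl hγ
  · simp
  · funext v
    show Sum.elim x 0 (Sum.inl v) + _ = x v
    rw [Finset.sum_eq_zero fun γ _ => by
      show (if v ∈ γ then Sum.elim x 0 (Sum.inr γ) / (γ.card:ℝ) else 0) = 0
      simp, add_zero]
    rfl

lemma phi_surj_aux {K S : Set (Finset V)} (hK : IsSC K) (hS1 : ∀ σ ∈ S, σ.Nonempty)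
    (hSU : ∀ σ₁ ∈ S, ∀ σ₂ ∈ S, σ₁ ∪ σ₂ ∈ K → σ₁ ∪ σ₂ ∈ S) :
    ∀ N : ℕ, ∀ x : V → ℝ, (∀ v, 0 ≤ x v) → suppV x ∈ K → (suppV x).card ≤ N →
    ∃ t δ C, Good K S δ C ∧ (∀ w, 0 ≤ t w) ∧ (∀ v, t (Sum.inl v) ≠ 0 → v ∈ δ) ∧
      (∀ γ, t (Sum.inr γ) ≠ 0 → γ ∈ C) ∧ δ ∪ C.sup id = suppV x ∧ Phi t = x := by
  intro N
  induction N with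
  | zero =>
    intro x hx0 hxK hcard
    have hempty : suppV x = ∅ := card_eq_zero.mp (by omega)
    refine phi_surj_base hx0 hxK ?_
    rintro ⟨σ, hσS, hσsub⟩
    obtain ⟨v, hv⟩ := hS1 σ hσS
    have := hσsub hv
    rw [hempty] at this
    exact absurd this (Finset.notMem_empty v)
  | succ N ih =>
    intro x hx0 hxK hcard
    by_cases hex : ∃ σ ∈ S, σ ⊆ suppV x
    case neg => exact phi_surj_base hx0 hxK hex
    case pos =>
      set T : Finset (Finset V) := univ.filter (fun σ => σ ∈ S ∧ σ ⊆ suppV x) with hTdef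
      have hTne : T.Nonempty := by
        obtain ⟨σ, hσS, hσsub⟩ := hex
        exact ⟨σ, by simp [hTdef, hσS, hσsub]⟩
      have hTmem : ∀ σ ∈ T, σ ∈ S ∧ σ ⊆ suppV x := fun σ hσ => by
        simpa [hTdef] using hσ
      set g := T.sup id with hgdef
      have hgSP : g ∈ S ∧ g ⊆ suppV x := by
        have h := Finset.sup'_mem {σ : Finset V | σ ∈ S ∧ σ ⊆ suppV x}
          (fun a ha b hb => by
            have hUK : a ∪ b ∈ K := hK _ hxK _ (union_subset ha.2 hb.2)
            exact ⟨hSU a ha.1 b hb.1 hUK, union_subset ha.2 hb.2⟩)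
          T hTne id (fun σ hσ => hTmem σ hσ)
        rwa [Finset.sup'_eq_sup hTne id] at h
      have hgS : g ∈ S := hgSP.1
      have hgsub : g ⊆ suppV x := hgSP.2
      have hgmax : ∀ σ ∈ S, σ ⊆ suppV x → σ ⊆ g := by
        intro σ hσS hσsub
        have hm : σ ∈ T := by rw [hTdef]; exact Finset.mem_filter.mpr ⟨mem_univ σ, hσS, hσsub⟩
        rw [hgdef]
        exact Finset.le_sup (f := id) hm
      obtain ⟨v₀, hv₀g, hmin⟩ := Finset.exists_min_image g x (hS1 g hgS)
      set τ := x v₀ with hτdef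
      have hτpos : 0 < τ := lt_of_le_of_ne (hx0 v₀) (Ne.symm (mem_suppV.mp (hgsub hv₀g)))
      set x' : V → ℝ := fun v => x v - if v ∈ g then τ else 0 with hx'def
      have hx'0 : ∀ v, 0 ≤ x' v := by
        intro v
        rw [hx'def]
        dsimp only
        split_ifs with hvg
        · exact sub_nonneg.mpr (hmin v hvg)
        · simpa using hx0 v
      have hx'v₀ : x' v₀ = 0 := by rw [hx'def]; simp [hv₀g, hτdef]
      have hsupp' : suppV x' ⊆ (suppV x).erase v₀ := by
        intro v hv
        have hvne : x' v ≠ 0 := mem_suppV.mp hv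
        refine mem_erase.mpr ⟨fun h => hvne (h ▸ hx'v₀), mem_suppV.mpr ?_⟩
        intro hxv
        apply hvne
        rw [hx'def]
        dsimp only
        split_ifs with hvg
        · exact absurd (mem_suppV.mp (hgsub hvg)) (not_not.mpr hxv)
        · simpa using hxv
      have hx'K : suppV x' ∈ K := hK _ hxK _ (hsupp'.trans (erase_subset _ _))
      have hx'card : (suppV x').card ≤ N := by
        have h1 := card_le_card hsupp'
        have h2 := card_erase_of_mem (hgsub hv₀g)
        have h3 : 1 ≤ (suppV x).card := card_pos.mpr ⟨v₀, hgsub hv₀g⟩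
        omega
      obtain ⟨t', δ', C', hgood', ht'0, ht'L, ht'R, ht'supp, ht'Phi⟩ := ih x' hx'0 hx'K hx'card
      have hsx'x : suppV x' ⊆ suppV x := hsupp'.trans (erase_subset _ _)
      have hδ'sub : δ' ⊆ suppV x' := by
        rw [← ht'supp]; exact subset_union_left
      have hC'sub : ∀ γ ∈ C', γ ⊆ suppV x' := fun γ hγ => by
        rw [← ht'supp]
        exact Finset.Subset.trans (Finset.le_sup (f := id) hγ) subset_union_right
      have hC'g : ∀ γ ∈ C', γ ⊆ g := fun γ hγ =>
        hgmax γ (hgood'.1 γ hγ) ((hC'sub γ hγ).trans hsx'x)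
      have hgC' : g ∉ C' := fun hg => by
        have := hC'sub g hg hv₀g
        exact (mem_suppV.mp this) hx'v₀
      have ht'g : t' (Sum.inr g) = 0 := by
        by_contra h; exact hgC' (ht'R g h)
      set t : V ⊕ Finset V → ℝ := Function.update t' (Sum.inr g) (τ * g.card) with htdef
      have hcg : (0:ℝ) < (g.card : ℝ) := by
        exact_mod_cast Finset.card_pos.mpr (hS1 g hgS)
      have hsupC' : C'.sup id ⊆ suppV x := by
        intro v hv
        obtain ⟨γ, hγ, hvγ⟩ := Finset.mem_sup.mp hv
        exact hsx'x (hC'sub γ hγ hvγ)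
      refine ⟨t, δ', insert g C', ?_, ?_, ?_, ?_, ?_, ?_⟩
      · obtain ⟨g1, g2, g3, g4, g5⟩ := hgood'
        refine ⟨?_, ?_, ?_, g4, ?_⟩
        · intro γ hγ
          rcases mem_insert.mp hγ with rfl | hγ
          · exact hgS
          · exact g1 γ hγ
        · intro γ hγ γ' hγ'
          rcases mem_insert.mp hγ with rfl | hγ <;> rcases mem_insert.mp hγ' with rfl | hγ'
          · exact Or.inl Subset.rfl
          · exact Or.inr (hC'g γ' hγ')
          · exact Or.inl (hC'g γ hγ)
          · exact g2 γ hγ γ' hγ'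
        · rw [Finset.sup_insert]
          refine hK _ hxK _ ?_
          refine union_subset (hδ'sub.trans hsx'x) (union_subset hgsub hsupC')
        · intro γ hγ σ hσ hsub
          rcases mem_insert.mp hγ with rfl | hγ
          · exact hgmax σ hσ (hsub.trans (union_subset (hδ'sub.trans hsx'x) hgsub))
          · exact g5 γ hγ σ hσ hsub
      · intro w
        rcases eq_or_ne w (Sum.inr g) with rfl | hne
        · rw [htdef, Function.update_self]
          positivity
        · rw [htdef, Function.update_of_ne hne]; exact ht'0 w
      · intro v hv
        rw [htdef, Function.update_of_ne (by simp)] at hv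
        exact ht'L v hv
      · intro γ hγ
        rcases eq_or_ne γ g with rfl | hne
        · exact mem_insert_self _ _
        · rw [htdef, Function.update_of_ne (fun h => hne (Sum.inr.inj h))] at hγ
          exact mem_insert_of_mem (ht'R γ hγ)
      · rw [Finset.sup_insert]
        apply subset_antisymm
        · exact union_subset (hδ'sub.trans hsx'x) (union_subset hgsub hsupC')
        · intro v hv
          by_cases hvg : v ∈ g
          · exact mem_union_right _ (mem_union_left _ hvg)
          · have : x' v ≠ 0 := by
              rw [hx'def]
              dsimp only
              rw [if_neg hvg, sub_zero]
              exact mem_suppV.mp hv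
            have hv' : v ∈ δ' ∪ C'.sup id := by
              rw [ht'supp]; exact mem_suppV.mpr this
            rcases mem_union.mp hv' with h | h
            · exact mem_union_left _ h
            · exact mem_union_right _ (mem_union_right _ h)
      · funext v
        rw [htdef, Phi_update_inr, ht'Phi, ht'g, sub_zero]
        rw [hx'def]
        dsimp only
        split_ifs with hvg
        · rw [mul_div_assoc, div_self (ne_of_gt hcg), mul_one]; ring
        · ring

lemma cone_of_geom {U : Type*} [Fintype U] {K : Set (Finset U)} {t : U → ℝ}
    (ht : t ∈ geomReal K) : t ∈ cone K := ⟨ht.1, ht.2.2⟩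

lemma inr_empty_zero {K S : Set (Finset V)} (hS1 : ∀ σ ∈ S, σ.Nonempty)
    {t : V ⊕ Finset V → ℝ} (ht : t ∈ cone (Sd K S)) : t (Sum.inr ∅) = 0 := by
  obtain ⟨h0, F, ⟨δ, C, hgood, rfl⟩, hsupp⟩ := ht
  by_contra h
  have := mem_Face_inr.mp (hsupp _ h)
  exact Finset.not_nonempty_empty (hS1 ∅ (hgood.1 ∅ this))

lemma geom_closed {U : Type*} [Fintype U] (K : Set (Finset U)) : IsClosed (geomReal K) := by
  have hrw : geomReal K = {t : U → ℝ | ∀ w, 0 ≤ t w} ∩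
      ({t | ∑ w, t w = 1} ∩ ⋃ F ∈ K, {t | ∀ w, t w ≠ 0 → w ∈ F}) := by
    ext t
    simp only [geomReal, Set.mem_setOf_eq, Set.mem_inter_iff, Set.mem_iUnion]
    constructor
    · rintro ⟨h1, h2, F, hF, h3⟩; exact ⟨h1, h2, F, hF, h3⟩
    · rintro ⟨h1, h2, F, hF, h3⟩; exact ⟨h1, h2, F, hF, h3⟩
  rw [hrw]
  refine IsClosed.inter ?_ (IsClosed.inter ?_ ?_)
  · have : {t : U → ℝ | ∀ w, 0 ≤ t w} = ⋂ w, {t | 0 ≤ t w} := by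
      ext t; simp
    rw [this]
    exact isClosed_iInter fun w => isClosed_le continuous_const (continuous_apply w)
  · exact isClosed_eq (continuous_finset_sum _ fun w _ => continuous_apply w) continuous_const
  · refine Set.Finite.isClosed_biUnion (Set.toFinite _) fun F _ => ?_
    have : {t : U → ℝ | ∀ w, t w ≠ 0 → w ∈ F} = ⋂ (w) (_ : w ∉ F), {t | t w = 0} := by
      ext t
      simp only [Set.mem_setOf_eq, Set.mem_iInter]
      constructor
      · intro h w hw
        by_contra h0
        exact hw (h w h0)
      · intro h w h0
        by_contra hw
        exact h0 (h w hw)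
    rw [this]
    exact isClosed_iInter fun w => isClosed_iInter fun _ =>
      isClosed_eq (continuous_apply w) continuous_const

lemma geom_compact {U : Type*} [Fintype U] (K : Set (Finset U)) :
    IsCompact (geomReal K) := by
  refine IsCompact.of_isClosed_subset
    (isCompact_univ_pi fun _ : U => isCompact_Icc (a := (0:ℝ)) (b := 1))
    (geom_closed K) ?_
  rintro t ⟨h1, h2, -⟩ w -
  exact ⟨h1 w, by rw [← h2]; exact Finset.single_le_sum (fun w' _ => h1 w') (mem_univ w)⟩

/-- The barycentric map is a homeomorphism of geometric realizations. -/
theorem sd_homeo {K S : Set (Finset V)} (hK : IsSC K) (hS1 : ∀ σ ∈ S, σ.Nonempty)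
    (hSU : ∀ σ₁ ∈ S, ∀ σ₂ ∈ S, σ₁ ∪ σ₂ ∈ K → σ₁ ∪ σ₂ ∈ S) :
    ∃ e : ↥(geomReal (Sd K S)) ≃ₜ ↥(geomReal K),
      ∀ t, ∀ v : V, (e t : V → ℝ) v = Phi (t : (V ⊕ Finset V) → ℝ) v := by
  classical
  have hmaps : ∀ t ∈ geomReal (Sd K S), Phi t ∈ geomReal K := by
    intro t ht
    obtain ⟨h1, h2, F, hF, hsupp⟩ := ht
    obtain ⟨δ, C, hgood, rfl⟩ := hF
    refine ⟨Phi_nonneg h1, ?_, δ ∪ C.sup id, hgood.2.2.1, fun v hv => ?_⟩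
    · rw [Phi_sum (inr_empty_zero hS1 ⟨h1, Face δ C, ⟨δ, C, hgood, rfl⟩, hsupp⟩)]
      exact h2
    · exact Phi_supp (fun v' h => mem_Face_inl.mp (hsupp _ h))
        (fun γ h => mem_Face_inr.mp (hsupp _ h)) hv
  set E : ↥(geomReal (Sd K S)) → ↥(geomReal K) :=
    fun t => ⟨Phi t.1, hmaps t.1 t.2⟩ with hEdef
  have hinj : Function.Injective E := by
    intro a b hab
    exact Subtype.ext (phi_inj hK hS1 a.1 (cone_of_geom a.2) b.1 (cone_of_geom b.2)
      (congrArg Subtype.val hab))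
  have hsurj : Function.Surjective E := by
    rintro ⟨x, hx⟩
    have hx0 := hx.1
    have hsx : suppV x ∈ K := by
      obtain ⟨-, -, F, hF, hsupp⟩ := hx
      exact hK F hF _ (fun v hv => hsupp v (mem_suppV.mp hv))
    obtain ⟨t, δ, C, hgood, ht0, htL, htR, htsupp, htPhi⟩ :=
      phi_surj_aux hK hS1 hSU (suppV x).card x hx0 hsx le_rfl
    have htE0 : t (Sum.inr ∅) = 0 := by
      by_contra h
      exact Finset.not_nonempty_empty (hS1 ∅ (hgood.1 ∅ (htR ∅ h)))
    have htg : t ∈ geomReal (Sd K S) := by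
      refine ⟨ht0, ?_, Face δ C, ⟨δ, C, hgood, rfl⟩, fun w hw => ?_⟩
      · rw [← Phi_sum htE0, htPhi]
        exact hx.2.1
      · cases w with
        | inl v => exact mem_Face_inl.mpr (htL v hw)
        | inr γ => exact mem_Face_inr.mpr (htR γ hw)
    exact ⟨⟨t, htg⟩, Subtype.ext htPhi⟩
  have hcont : Continuous E := by
    refine Continuous.subtype_mk ?_ _
    refine continuous_pi fun v => ?_
    refine Continuous.add ((continuous_apply (Sum.inl v)).comp continuous_subtype_val) ?_
    refine continuous_finset_sum _ fun γ _ => ?_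
    by_cases h : v ∈ γ
    · simp only [if_pos h]
      exact ((continuous_apply (Sum.inr γ)).comp continuous_subtype_val).div_const _
    · simp only [if_neg h]
      exact continuous_const
  haveI : CompactSpace ↥(geomReal (Sd K S)) :=
    isCompact_iff_compactSpace.mp (geom_compact _)
  refine ⟨Continuous.homeoOfEquivCompactToT2
    (f := Equiv.ofBijective E ⟨hinj, hsurj⟩) hcont, fun t v => rfl⟩

end RelBary

/-- **Winter, Proposition 5.3 (`subdivision`), combinatorial form (relative barycentric
subdivision)**: let `K` be a complex on `Σ⁺ = Σ⁽¹⁾ ⊔ Σ⁽²⁾ ⊔ {*}` whose faces contained in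
`Σ = Σ⁽¹⁾ ⊔ Σ⁽²⁾` have at most `n+1` vertices, and whose restriction to `Σ⁽¹⁾` is
`n`-decomposable (via the colouring `c`).  Then there is a subdivision `Sd_J K` (on the
enlarged vertex universe in which faces of `K` serve as new vertices) such that:
(i) its vertices are the old vertices together with faces of `K` meeting `Σ⁽²⁾`;
(ii) sending each new vertex to the barycenter of the corresponding face induces a
linear homeomorphism `|Sd_J K| ≃ |K|`;
(iii) `Sd_J K ∩ Δ^{Σ⁽¹⁾} = J`, the subcomplex of `K` generated by `Σ⁽¹⁾`; and
(iv) the vertices other than `*` admit an `(n+1)`-colouring such that no face contains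
two distinct vertices of the same colour. -/
theorem relative_barycentric_subdivision (S1 S2 : Type) [Fintype S1] [DecidableEq S1]
    [Fintype S2] [DecidableEq S2] (n : ℕ)
    (K : Set (Finset (VStar S1 S2))) (hK : IsSC K)
    (hsmall : ∀ γ ∈ K, (∀ v ∈ γ, v ≠ (none : VStar S1 S2)) → γ.card ≤ n + 1)
    (c : S1 → Fin (n + 1))
    (hc : ∀ γ ∈ K, ∀ i j : S1, (some (Sum.inl i) : VStar S1 S2) ∈ γ →
      (some (Sum.inl j) : VStar S1 S2) ∈ γ → i ≠ j → c i ≠ c j) :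
    ∃ SdK : Set (Finset (VStar S1 S2 ⊕ Finset (VStar S1 S2))),
      IsSC SdK ∧
      -- (i): old vertices survive, and any new vertex is a face of K meeting Σ⁽²⁾
      (∀ v : VStar S1 S2, {v} ∈ K → Sum.inl v ∈ SCvertices SdK) ∧
      (∀ w ∈ SCvertices SdK, (∃ v : VStar S1 S2, w = Sum.inl v) ∨
        ∃ γ ∈ K, w = Sum.inr γ ∧ ∃ j : S2, (some (Sum.inr j) : VStar S1 S2) ∈ γ) ∧
      -- (ii): the barycentric map is a linear homeomorphism |Sd_J K| ≃ |K|
      (∃ e : ↥(geomReal SdK) ≃ₜ ↥(geomReal K),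
        ∀ t, ∀ v : VStar S1 S2,
          (e t : VStar S1 S2 → ℝ) v =
            (t : (VStar S1 S2 ⊕ Finset (VStar S1 S2)) → ℝ) (Sum.inl v) +
            ∑ γ : Finset (VStar S1 S2),
              (if v ∈ γ then
                (t : (VStar S1 S2 ⊕ Finset (VStar S1 S2)) → ℝ) (Sum.inr γ) / (γ.card : ℝ)
              else 0)) ∧
      -- (iii): the subcomplex generated by Σ⁽¹⁾ is left unchanged
      ({γ ∈ SdK | ∀ w ∈ γ, ∃ i : S1, w = Sum.inl (some (Sum.inl i))} =
        (fun γ : Finset (VStar S1 S2) => γ.image Sum.inl) ''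
          {γ ∈ K | ∀ v ∈ γ, ∃ i : S1, v = some (Sum.inl i)}) ∧
      -- (iv): (n+1)-colourability of the vertices other than *
      (∃ c' : (VStar S1 S2 ⊕ Finset (VStar S1 S2)) → Fin (n + 1),
        ∀ γ ∈ SdK, ∀ w ∈ γ, ∀ w' ∈ γ, w ≠ w' →
          w ≠ Sum.inl (none : VStar S1 S2) → w' ≠ Sum.inl (none : VStar S1 S2) →
          c' w ≠ c' w') := by
  classical
  -- the faces which get subdivided
  set S : Set (Finset (VStar S1 S2)) := {γ | γ ∈ K ∧ 2 ≤ γ.card ∧ (∃ j : S2, some (Sum.inr j) ∈ γ) ∧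
      ((none : (VStar S1 S2)) ∉ γ) ∧ ∀ i : S1, some (Sum.inl i) ∈ γ → (c i : ℕ) + 2 ≤ γ.card} with hSdef
  have hS1 : ∀ σ ∈ S, σ.Nonempty := by
    rintro σ ⟨-, h2, -, -, -⟩
    exact Finset.card_pos.mp (by omega)
  have hSU : ∀ σ₁ ∈ S, ∀ σ₂ ∈ S, σ₁ ∪ σ₂ ∈ K → σ₁ ∪ σ₂ ∈ S := by
    rintro σ₁ ⟨h1K, h12, h1j, h1n, h1c⟩ σ₂ ⟨h2K, h22, h2j, h2n, h2c⟩ hUK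
    refine ⟨hUK, le_trans h12 (Finset.card_le_card Finset.subset_union_left), ?_, ?_, ?_⟩
    · obtain ⟨j, hj⟩ := h1j; exact ⟨j, Finset.mem_union_left _ hj⟩
    · intro h
      rcases Finset.mem_union.mp h with h | h
      exacts [h1n h, h2n h]
    · intro i hi
      rcases Finset.mem_union.mp hi with h | h
      · exact le_trans (h1c i h) (Finset.card_le_card Finset.subset_union_left)
      · exact le_trans (h2c i h) (Finset.card_le_card Finset.subset_union_right)
  refine ⟨RelBary.Sd K S, RelBary.sd_isSC hK, ?_, ?_, ?_, ?_, ?_⟩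
  · -- (i) part 1: old vertices survive
    intro v hv
    show ({Sum.inl v} : Finset ((VStar S1 S2) ⊕ Finset (VStar S1 S2))) ∈ RelBary.Sd K S
    refine ⟨{v}, ∅, ⟨by simp, by simp, by simpa using hv, ?_, by simp⟩, by simp [RelBary.Face]⟩
    rintro σ ⟨-, h2, -, -, -⟩ hsub
    have := Finset.card_le_card hsub
    simp only [Finset.card_singleton] at this
    omega
  · -- (i) part 2: new vertices are faces of K meeting Σ⁽²⁾
    intro w hw
    obtain ⟨δ, C, hgood, hFe⟩ := hw
    cases w with
    | inl v => exact Or.inl ⟨v, rfl⟩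
    | inr γ =>
      right
      have hmem : Sum.inr γ ∈ RelBary.Face δ C := by
        rw [← hFe]; exact Finset.mem_singleton_self _
      obtain ⟨hγK, -, hγj, -, -⟩ := hgood.1 γ (RelBary.mem_Face_inr.mp hmem)
      exact ⟨γ, hγK, rfl, hγj⟩
  · -- (ii) the homeomorphism
    obtain ⟨e, he⟩ := RelBary.sd_homeo hK hS1 hSU
    exact ⟨e, fun t v => he t v⟩
  · -- (iii) the subcomplex on Σ⁽¹⁾ is unchanged
    ext F
    simp only [Set.mem_sep_iff, Set.mem_image]
    constructor
    · rintro ⟨⟨δ, C, hgood, rfl⟩, hpure⟩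
      have hC : C = ∅ := by
        rcases Finset.eq_empty_or_nonempty C with h | ⟨γ, hγ⟩
        · exact h
        · exfalso
          obtain ⟨i, hi⟩ := hpure (Sum.inr γ) (RelBary.mem_Face_inr.mpr hγ)
          cases hi
      subst hC
      refine ⟨δ, ⟨by simpa using hgood.2.2.1, fun v hv => ?_⟩, by simp [RelBary.Face]⟩
      obtain ⟨i, hi⟩ := hpure (Sum.inl v) (RelBary.mem_Face_inl.mpr hv)
      exact ⟨i, by injection hi⟩
    · rintro ⟨δ, ⟨hδK, hδpure⟩, rfl⟩
      constructor
      · refine ⟨δ, ∅, ⟨by simp, by simp, by simpa using hδK, ?_, by simp⟩, by simp [RelBary.Face]⟩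
        rintro σ ⟨-, -, ⟨j, hj⟩, -, -⟩ hsub
        obtain ⟨i, hi⟩ := hδpure _ (hsub hj)
        simp at hi
      · intro w hw
        obtain ⟨v, hv, rfl⟩ := Finset.mem_image.mp hw
        obtain ⟨i, hi⟩ := hδpure v hv
        exact ⟨i, by rw [hi]⟩
  · -- (iv) the colouring
    refine ⟨fun w => match w with
      | Sum.inl (some (Sum.inl i)) => c i
      | Sum.inl _ => (0 : Fin (n+1))
      | Sum.inr γ => (⟨(γ.card - 1) % (n+1), Nat.mod_lt _ (Nat.succ_pos n)⟩ : Fin (n+1)), ?_⟩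
    rintro F ⟨δ, C, ⟨g1, g2, g3, g4, g5⟩, rfl⟩ w hw w' hw' hne hwn hw'n
    have hδK : δ ∈ K := hK _ g3 δ Finset.subset_union_left
    -- auxiliary: a pair inside δ whose second member is an S2-vertex and whose first member
    -- either is an S2-vertex or an S1-vertex of colour 0 would be a face of S inside δ
    have pairS : ∀ a b : (VStar S1 S2), a ∈ δ → b ∈ δ → a ≠ b → (∃ j : S2, b = some (Sum.inr j)) →
        a ≠ none → (∀ i : S1, a = some (Sum.inl i) → (c i : ℕ) = 0) → False := by
      rintro a b ha hb hab ⟨j0, rfl⟩ han hacol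
      have hcard2 : (insert a {some (Sum.inr j0)} : Finset (VStar S1 S2)).card = 2 := by
        rw [Finset.card_insert_of_notMem (by simp [hab]), Finset.card_singleton]
      refine g4 (insert a {some (Sum.inr j0)}) ⟨?_, ?_, ?_, ?_, ?_⟩ ?_
      · exact hK _ hδK _ (Finset.insert_subset ha (Finset.singleton_subset_iff.mpr hb))
      · omega
      · exact ⟨j0, Finset.mem_insert_of_mem (Finset.mem_singleton_self _)⟩
      · intro h
        rcases Finset.mem_insert.mp h with h | h
        · exact han h.symm
        · simp at h
      · intro i'' hi''
        rcases Finset.mem_insert.mp hi'' with h | h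
        · have := hacol i'' h.symm
          omega
        · simp at h
      · exact Finset.insert_subset ha (Finset.singleton_subset_iff.mpr hb)
    -- key 2: a vertex of δ and a barycenter have different colours
    have key2 : ∀ v ∈ δ, v ≠ (none : (VStar S1 S2)) → ∀ γ ∈ C,
        ((match (Sum.inl v : (VStar S1 S2) ⊕ Finset (VStar S1 S2)) with
          | Sum.inl (some (Sum.inl i)) => c i
          | Sum.inl _ => (0 : Fin (n+1))
          | Sum.inr γ => ⟨(γ.card - 1) % (n+1), Nat.mod_lt _ (Nat.succ_pos n)⟩) : Fin (n+1)) ≠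
        ⟨(γ.card - 1) % (n+1), Nat.mod_lt _ (Nat.succ_pos n)⟩ := by
      intro v hvδ hvnone γ hγC
      obtain ⟨hγK, hγ2, hγj, hγnone, hγcol⟩ := g1 γ hγC
      have hγn1 : γ.card ≤ n+1 := hsmall γ hγK (fun u hu he => hγnone (he ▸ hu))
      have hmod : (γ.card - 1) % (n+1) = γ.card - 1 := Nat.mod_eq_of_lt (by omega)
      match v, hvnone with
      | some (Sum.inl i), _ =>
        intro heq
        have hval : (c i : ℕ) = γ.card - 1 := by
          have := congrArg Fin.val heq
          simpa [hmod] using this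
        by_cases hin : (some (Sum.inl i) : (VStar S1 S2)) ∈ γ
        · have := hγcol i hin
          omega
        · have hσsub : insert (some (Sum.inl i) : (VStar S1 S2)) γ ⊆ δ ∪ γ :=
            Finset.insert_subset (Finset.mem_union_left _ hvδ) Finset.subset_union_right
          have hσK : insert (some (Sum.inl i) : (VStar S1 S2)) γ ∈ K := by
            refine hK _ g3 _ (hσsub.trans (Finset.union_subset_union Finset.Subset.rfl ?_))
            exact Finset.le_sup (f := id) hγC
          have hσS : insert (some (Sum.inl i) : (VStar S1 S2)) γ ∈ S := by
            refine ⟨hσK, ?_, ?_, ?_, ?_⟩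
            · rw [Finset.card_insert_of_notMem hin]; omega
            · obtain ⟨j, hj⟩ := hγj; exact ⟨j, Finset.mem_insert_of_mem hj⟩
            · intro hmem
              rcases Finset.mem_insert.mp hmem with h | h
              · cases h
              · exact hγnone h
            · intro i' hi'
              rcases Finset.mem_insert.mp hi' with h | h
              · have hii : i' = i := by
                  have h1 := Option.some.inj h
                  exact Sum.inl.inj h1
                subst hii
                rw [Finset.card_insert_of_notMem hin]
                omega
              · have := hγcol i' h
                rw [Finset.card_insert_of_notMem hin]
                omega
          exact hin (g5 γ hγC _ hσS hσsub (Finset.mem_insert_self _ _))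
      | some (Sum.inr j), _ =>
        intro heq
        have := congrArg Fin.val heq
        simp only [Fin.val_zero, hmod] at this
        omega
    have hwmem : ∀ u : (VStar S1 S2) ⊕ Finset (VStar S1 S2), u ∈ RelBary.Face δ C →
        (∃ v ∈ δ, u = Sum.inl v) ∨ (∃ γ ∈ C, u = Sum.inr γ) := by
      intro u hu
      rcases Finset.mem_union.mp hu with h | h
      · obtain ⟨v, hv, rfl⟩ := Finset.mem_image.mp h
        exact Or.inl ⟨v, hv, rfl⟩
      · obtain ⟨γ, hγ, rfl⟩ := Finset.mem_image.mp h
        exact Or.inr ⟨γ, hγ, rfl⟩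
    rcases hwmem w hw with ⟨v, hvδ, rfl⟩ | ⟨γ, hγC, rfl⟩ <;>
      rcases hwmem w' hw' with ⟨v', hv'δ, rfl⟩ | ⟨γ', hγ'C, rfl⟩
    · -- both old vertices
      have hvn : v ≠ (none : (VStar S1 S2)) := fun h => hwn (by rw [h])
      have hv'n : v' ≠ (none : (VStar S1 S2)) := fun h => hw'n (by rw [h])
      have hvv' : v ≠ v' := fun h => hne (by rw [h])
      match v, hvn, v', hv'n with
      | some (Sum.inl i), _, some (Sum.inl i'), _ =>
        exact hc δ hδK i i' hvδ hv'δ (fun h => hvv' (by rw [h]))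
      | some (Sum.inl i), _, some (Sum.inr j'), _ =>
        intro h0
        have hci : (c i : ℕ) = 0 := by
          have := congrArg Fin.val h0
          simpa using this
        exact pairS _ _ hvδ hv'δ hvv' ⟨j', rfl⟩ (by simp)
          (fun i'' hi'' => by
            have h1 := Option.some.inj hi''
            have h2 := Sum.inl.inj h1
            rw [h2] at hci
            exact hci)
      | some (Sum.inr j), _, some (Sum.inl i'), _ =>
        intro h0
        have hci : (c i' : ℕ) = 0 := by
          have := congrArg Fin.val h0
          simpa using this.symm
        exact pairS _ _ hv'δ hvδ hvv'.symm ⟨j, rfl⟩ (by simp)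
          (fun i'' hi'' => by
            have h1 := Option.some.inj hi''
            have h2 := Sum.inl.inj h1
            rw [h2] at hci
            exact hci)
      | some (Sum.inr j), _, some (Sum.inr j'), _ =>
        exact (pairS _ _ hvδ hv'δ hvv' ⟨j', rfl⟩ (by simp) (fun i'' h => by simp at h)).elim
    · -- old vertex vs barycenter
      have hvn : v ≠ (none : (VStar S1 S2)) := fun h => hwn (by rw [h])
      exact key2 v hvδ hvn γ' hγ'C
    · -- barycenter vs old vertex
      have hv'n : v' ≠ (none : (VStar S1 S2)) := fun h => hw'n (by rw [h])
      exact (key2 v' hv'δ hv'n γ hγC).symm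
    · -- two barycenters
      have hγne : γ ≠ γ' := fun h => hne (by rw [h])
      obtain ⟨hγK, hγ2, -, hγnone, -⟩ := g1 γ hγC
      obtain ⟨hγ'K, hγ'2, -, hγ'none, -⟩ := g1 γ' hγ'C
      have hγn1 : γ.card ≤ n+1 := hsmall γ hγK (fun u hu he => hγnone (he ▸ hu))
      have hγ'n1 : γ'.card ≤ n+1 := hsmall γ' hγ'K (fun u hu he => hγ'none (he ▸ hu))
      have hmod : (γ.card - 1) % (n+1) = γ.card - 1 := Nat.mod_eq_of_lt (by omega)
      have hmod' : (γ'.card - 1) % (n+1) = γ'.card - 1 := Nat.mod_eq_of_lt (by omega)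
      have hcc : γ.card ≠ γ'.card := by
        rcases g2 γ hγC γ' hγ'C with hss | hss
        · exact Nat.ne_of_lt (Finset.card_lt_card ⟨hss, fun h => hγne
            (Finset.Subset.antisymm hss h)⟩)
        · exact (Nat.ne_of_lt (Finset.card_lt_card ⟨hss, fun h => hγne
            (Finset.Subset.antisymm h hss)⟩)).symm
      intro heq
      have := congrArg Fin.val heq
      simp only [hmod, hmod'] at this
      omega


end
end
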